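/- arXiv:1407.5649 — 2 statements merged into one kernel-verified Lean document; each statement's English description precedes it below -/
import Mathlib

section
/- Suppose φ is the homothety with center m ∈ Δ(Ω) and ratio λ ∈ [0,1). Then the greedy strategy is optimal when the initial distribution is the invariant distribution m: every bounded function V : Δ(Ω) → ℝ satisfying the dynamic programming equation satisfies V(m) = γ(m), where γ is the greedy payoff. -/
/-!
The proof compares `V` and `γ` with the affine functions
`W_y(p) = ⟨m, y⟩ + (1 - δ) / (1 - δλ) · ⟨p - m, y⟩`, the discounted averages of `⟨·, y⟩` along
`φ`-orbits, which therefore satisfy `W_y = (1 - δ) ⟨·, y⟩ + δ W_y ∘ φ`. If `y ≥ 0` and `⟨·, y⟩ ≥ 1`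
on `I`, then `μ(I) ≤ ⟨p, y⟩` for every splitting `μ` of `p`, so the dynamic programming operator
is dominated by a `δ`-contraction fixing `W_y`; hence `V ≤ W_y`, and `V(m) ≤ ⟨m, y⟩`.

If `m ∈ I`, take `y = 1`: not splitting at `m` gives `V(m) ≥ 1 = γ(m)`. Otherwise `m` lies in the
region `T_j` of beliefs at which the greedy splitting cuts `Ω⁻` at `ω_{j+1}`; `φ` maps `T_j`, and
the greedy posteriors of its points, back into `T_j`. Take for `y` the dual solution of (LP') on
`T_j`. There the greedy splitting has `⟨q_I, y⟩ = 1`, `⟨q_J, y⟩ = 0` and `a_I = ⟨p, y⟩`, so `W_y`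
is a fixed point of the greedy Bellman operator on `T_j`, as is `γ`, while `V` is a supersolution.
The same contraction argument gives `γ = W_y ≤ V` on `T_j`, so `V(m) = ⟨m, y⟩ = γ(m)`.
-/

open MeasureTheory Set

noncomputable section

variable {Ω : Type*}

/-- The investment region `I = {p ∈ Δ(Ω) : ⟨p,r⟩ ≥ 0}`. -/
def invest [Fintype Ω] (r : Ω → ℝ) : Set (Ω → ℝ) :=
  {p | p ∈ stdSimplex ℝ Ω ∧ 0 ≤ ∑ ω, p ω * r ω}

/-- The set `S(p)` of splittings at `p`: Borel probability measures on `ℝ^Ω` carried by the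
simplex `Δ(Ω)` with barycenter `p`. -/
def Splittings [Fintype Ω] (p : Ω → ℝ) : Set (Measure (Ω → ℝ)) :=
  {μ | IsProbabilityMeasure μ ∧ μ (stdSimplex ℝ Ω) = 1 ∧ ∫ q, q ∂μ = p}

/-- The payoff `(1−δ)·μ(I) + δ·∫ V(φ(q)) dμ(q)` appearing in the dynamic programming
equation. -/
def dppPayoff [Fintype Ω] (r : Ω → ℝ) (δ : ℝ) (φ : (Ω → ℝ) → Ω → ℝ)
    (V : (Ω → ℝ) → ℝ) (μ : Measure (Ω → ℝ)) : ℝ :=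
  (1 - δ) * (μ (invest r)).toReal + δ * ∫ q in stdSimplex ℝ Ω, V (φ q) ∂μ

/-- `V` satisfies the dynamic programming equation
`V(p) = sup_{μ ∈ S(p)} [(1−δ)·μ(I) + δ·∫ V(φ(q)) dμ(q)]` on the simplex. -/
def SatisfiesDPP [Fintype Ω] (r : Ω → ℝ) (δ : ℝ) (φ : (Ω → ℝ) → Ω → ℝ)
    (V : (Ω → ℝ) → ℝ) : Prop :=
  ∀ p ∈ stdSimplex ℝ Ω, V p = sSup (dppPayoff r δ φ V '' Splittings p)

/-- `L_k(p) = Σ_{ω∈Ω⁺} p(ω)r(ω) + Σ_{i≤k} p(ω_i)r(ω_i)`, where `ω_{i+1} = e i` enumerates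
`Ω⁻` by decreasing payoff. -/
def Lfun [Fintype Ω] (r : Ω → ℝ) {K : ℕ} (e : Fin K → Ω) (k : ℕ) (p : Ω → ℝ) : ℝ :=
  ∑ ω ∈ Finset.univ.filter (fun ω => 0 ≤ r ω), p ω * r ω
    + ∑ i ∈ Finset.univ.filter (fun i : Fin K => (i : ℕ) + 1 ≤ k), p (e i) * r (e i)

/-- `k*(p) = min {k ≥ 1 : L_k(p) ≤ 0}`. -/
def kstar [Fintype Ω] (r : Ω → ℝ) {K : ℕ} (e : Fin K → Ω) (p : Ω → ℝ) : ℕ :=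
  sInf {k : ℕ | 1 ≤ k ∧ Lfun r e k p ≤ 0}

/-- The optimal solution `π*(p)` of the program (LP'): it agrees with `p` on `Ω⁺` and on
`ω_i` for `i < k*(p)`, vanishes on `ω_i` for `i > k*(p)`, and equals
`−L_{k*(p)−1}(p)/r(ω_{k*(p)})` at `ω_{k*(p)}`. -/
def piStar [Fintype Ω] [DecidableEq Ω] (r : Ω → ℝ) {K : ℕ} (e : Fin K → Ω) (p : Ω → ℝ) :
    Ω → ℝ :=
  (fun ω => if 0 ≤ r ω then p ω else 0)
    + ∑ i : Fin K,
        (if (i : ℕ) + 1 < kstar r e p then p (e i)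
         else if (i : ℕ) + 1 = kstar r e p then -(Lfun r e (kstar r e p - 1) p) / r (e i)
         else 0) • (Pi.single (e i) 1 : Ω → ℝ)

/-- The weight `a_I` of the greedy splitting: the total mass of `π*(p)`. -/
def aI [Fintype Ω] [DecidableEq Ω] (r : Ω → ℝ) {K : ℕ} (e : Fin K → Ω) (p : Ω → ℝ) : ℝ :=
  ∑ ω, piStar r e p ω

/-- The posterior `q_I` of the greedy splitting: the normalization of `π*(p)`. -/
def qI [Fintype Ω] [DecidableEq Ω] (r : Ω → ℝ) {K : ℕ} (e : Fin K → Ω) (p : Ω → ℝ) :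
    Ω → ℝ :=
  (aI r e p)⁻¹ • piStar r e p

/-- The posterior `q_J` of the greedy splitting: the normalization of `p − π*(p)`. -/
def qJ [Fintype Ω] [DecidableEq Ω] (r : Ω → ℝ) {K : ℕ} (e : Fin K → Ω) (p : Ω → ℝ) :
    Ω → ℝ :=
  (1 - aI r e p)⁻¹ • (p - piStar r e p)

namespace GreedySplitting

theorem nonpos_of_forall_le_mul {α : Type*} {S : Set α} {f : α → ℝ} {δ : ℝ} (hδ : δ < 1)
    (hf : BddAbove (f '' S))
    (h : ∀ M, 0 ≤ M → (∀ q ∈ S, f q ≤ M) → ∀ p ∈ S, f p ≤ δ * M) :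
    ∀ p ∈ S, f p ≤ 0 := by
  intro p hp
  have hA : ∀ q ∈ S, f q ≤ sSup (f '' S) := fun q hq => le_csSup hf (mem_image_of_mem f hq)
  have hstep := h _ (le_max_right _ 0) fun q hq => (hA q hq).trans (le_max_left _ 0)
  have hsup : sSup (f '' S) ≤ δ * max (sSup (f '' S)) 0 :=
    csSup_le ⟨f p, mem_image_of_mem f hp⟩ (forall_mem_image.2 hstep)
  have : sSup (f '' S) ≤ 0 := by
    by_contra! hpos
    rw [max_eq_left hpos.le] at hsup
    nlinarith
  exact (hA p hp).trans this

theorem bddAbove_image_sub {α : Type*} {s t : Set α} (hts : t ⊆ s) {f g : α → ℝ}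
    (hf : ∃ C, ∀ p ∈ s, |f p| ≤ C) (hg : ∃ C, ∀ p ∈ s, |g p| ≤ C) :
    BddAbove ((fun p => f p - g p) '' t) := by
  obtain ⟨C, hC⟩ := hf
  obtain ⟨D, hD⟩ := hg
  exact ⟨C + D, forall_mem_image.2 fun p hp => by
    linarith [(abs_le.1 (hC p (hts hp))).2, (abs_le.1 (hD p (hts hp))).1]⟩

section TwoPoint

variable {α : Type*} [MeasurableSpace α]

def twoPoint (a : ℝ) (x z : α) : Measure α :=
  ENNReal.ofReal a • Measure.dirac x + ENNReal.ofReal (1 - a) • Measure.dirac z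

theorem twoPoint_apply_of_mem {a : ℝ} (ha : a ∈ Icc (0 : ℝ) 1) {x z : α}
    {s : Set α} (hx : x ∈ s) (hz : z ∈ s) : twoPoint a x z s = 1 := by
  simp [twoPoint, Measure.dirac_apply_of_mem hx, Measure.dirac_apply_of_mem hz,
    ← ENNReal.ofReal_add ha.1 (sub_nonneg.2 ha.2)]

theorem isProbabilityMeasure_twoPoint {a : ℝ} (ha : a ∈ Icc (0 : ℝ) 1) (x z : α) :
    IsProbabilityMeasure (twoPoint a x z) :=
  ⟨twoPoint_apply_of_mem ha (mem_univ x) (mem_univ z)⟩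

theorem le_twoPoint_apply {a : ℝ} (ha : a ∈ Icc (0 : ℝ) 1) {x : α} (z : α)
    {s : Set α} (hx : x ∈ s) : a ≤ (twoPoint a x z s).toReal := by
  have := isProbabilityMeasure_twoPoint ha x z
  have h : ENNReal.ofReal a ≤ twoPoint a x z s := by
    simp [twoPoint, Measure.dirac_apply_of_mem hx]
  simpa [ENNReal.toReal_ofReal ha.1] using ENNReal.toReal_mono (measure_ne_top _ s) h

theorem integral_twoPoint [MeasurableSingletonClass α] {E : Type*} [NormedAddCommGroup E]
    [NormedSpace ℝ E] [CompleteSpace E] {a : ℝ} (ha : a ∈ Icc (0 : ℝ) 1) (x z : α) (f : α → E) :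
    ∫ q, f q ∂twoPoint a x z = a • f x + (1 - a) • f z := by
  have hdirac : ∀ w, Integrable f (Measure.dirac w) := fun w => integrable_dirac enorm_lt_top
  rw [twoPoint, integral_add_measure ((hdirac x).smul_measure ENNReal.ofReal_ne_top)
    ((hdirac z).smul_measure ENNReal.ofReal_ne_top), integral_smul_measure, integral_smul_measure,
    integral_dirac, integral_dirac, ENNReal.toReal_ofReal ha.1,
    ENNReal.toReal_ofReal (sub_nonneg.2 ha.2)]

end TwoPoint

variable {K : ℕ}

structure IsNegEnum (r : Ω → ℝ) (e : Fin K → Ω) : Prop where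
  injective : Function.Injective e
  neg_iff : ∀ ω, r ω < 0 ↔ ω ∈ range e
  antitone : Antitone fun i => r (e i)

variable {r : Ω → ℝ} {e : Fin K → Ω}

theorem IsNegEnum.payoff_neg (he : IsNegEnum r e) (i : Fin K) : r (e i) < 0 :=
  (he.neg_iff (e i)).2 ⟨i, rfl⟩

theorem IsNegEnum.nonneg_or_exists_eq (he : IsNegEnum r e) (ω : Ω) : 0 ≤ r ω ∨ ∃ i, e i = ω := by
  rw [← not_lt, he.neg_iff]
  exact (em _).symm

variable {j : Fin K}

/-- The optimal dual solution of the linear program (LP') on `cutoffRegion r e j`. -/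
def dualVec (r : Ω → ℝ) (e : Fin K → Ω) (j : Fin K) : Ω → ℝ :=
  fun ω => max (1 - r ω / r (e j)) 0

theorem dualVec_nonneg : 0 ≤ dualVec r e j := fun _ => le_max_right _ _

theorem IsNegEnum.dualVec_of_le (he : IsNegEnum r e) {ω : Ω} (h : r ω ≤ r (e j)) :
    dualVec r e j ω = 0 := by
  refine max_eq_right (sub_nonpos.2 ?_)
  rwa [le_div_iff_of_neg (he.payoff_neg j), one_mul]

theorem IsNegEnum.dualVec_of_ge (he : IsNegEnum r e) {ω : Ω} (h : r (e j) ≤ r ω) :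
    dualVec r e j ω = 1 - r ω / r (e j) := by
  refine max_eq_left (sub_nonneg.2 ?_)
  rwa [div_le_iff_of_neg (he.payoff_neg j), one_mul]

variable [Fintype Ω]

theorem ae_mem_stdSimplex_of_mem_splittings {p : Ω → ℝ} {μ : Measure (Ω → ℝ)}
    (hμ : μ ∈ Splittings p) : ∀ᵐ q ∂μ, q ∈ stdSimplex ℝ Ω := by
  have := hμ.1
  rw [ae_mem_iff_measure_eq (isClosed_stdSimplex ℝ Ω).measurableSet.nullMeasurableSet, hμ.2.1,
    measure_univ]

theorem restrict_stdSimplex_of_mem_splittings {p : Ω → ℝ} {μ : Measure (Ω → ℝ)}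
    (hμ : μ ∈ Splittings p) : μ.restrict (stdSimplex ℝ Ω) = μ :=
  Measure.restrict_eq_self_of_ae_mem (ae_mem_stdSimplex_of_mem_splittings hμ)

theorem integrable_id_of_mem_splittings {p : Ω → ℝ} {μ : Measure (Ω → ℝ)}
    (hμ : μ ∈ Splittings p) : Integrable (fun q : Ω → ℝ => q) μ := by
  have := hμ.1
  refine Integrable.of_bound aestronglyMeasurable_id 1 ?_
  filter_upwards [ae_mem_stdSimplex_of_mem_splittings hμ] with q hq
  simpa using stdSimplex_subset_closedBall hq

def dotProductCLM (y : Ω → ℝ) : (Ω → ℝ) →L[ℝ] ℝ :=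
  LinearMap.toContinuousLinearMap ((dotProductBilin ℝ ℝ).flip y)

theorem dotProductCLM_apply (y q : Ω → ℝ) : dotProductCLM y q = q ⬝ᵥ y := by
  simp [dotProductCLM]

theorem integrable_dotProduct_of_mem_splittings {p : Ω → ℝ} {μ : Measure (Ω → ℝ)}
    (hμ : μ ∈ Splittings p) (y : Ω → ℝ) : Integrable (fun q => q ⬝ᵥ y) μ := by
  simpa only [dotProductCLM_apply] using
    (dotProductCLM y).integrable_comp (integrable_id_of_mem_splittings hμ)

theorem integral_dotProduct_of_mem_splittings {p : Ω → ℝ} {μ : Measure (Ω → ℝ)}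
    (hμ : μ ∈ Splittings p) (y : Ω → ℝ) : ∫ q, q ⬝ᵥ y ∂μ = p ⬝ᵥ y := by
  simpa only [dotProductCLM_apply, hμ.2.2] using
    (dotProductCLM y).integral_comp_comm (integrable_id_of_mem_splittings hμ)

theorem measurableSet_invest (r : Ω → ℝ) : MeasurableSet (invest r) := by
  have : Continuous fun p : Ω → ℝ => ∑ ω, p ω * r ω := by fun_prop
  exact ((isClosed_stdSimplex ℝ Ω).inter (isClosed_le continuous_const this)).measurableSet

theorem measure_invest_le_dotProduct {r y p : Ω → ℝ} {μ : Measure (Ω → ℝ)}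
    (hμ : μ ∈ Splittings p) (hy : 0 ≤ y) (hyI : ∀ q ∈ invest r, 1 ≤ q ⬝ᵥ y) :
    (μ (invest r)).toReal ≤ p ⬝ᵥ y := by
  have := hμ.1
  have hind : ∫ q, (invest r).indicator (fun _ => (1 : ℝ)) q ∂μ = (μ (invest r)).toReal := by
    simp [integral_indicator_const _ (measurableSet_invest r), measureReal_def]
  rw [← hind, ← integral_dotProduct_of_mem_splittings hμ y]
  refine integral_mono_ae ((integrable_const _).indicator (measurableSet_invest r))
    (integrable_dotProduct_of_mem_splittings hμ y) ?_
  filter_upwards [ae_mem_stdSimplex_of_mem_splittings hμ] with q hq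
  by_cases hqI : q ∈ invest r
  · simpa [hqI] using hyI q hqI
  · simp only [hqI, not_false_eq_true, indicator_of_notMem]
    exact Finset.sum_nonneg fun ω _ => mul_nonneg (hq.1 ω) (hy ω)

theorem dirac_mem_splittings {p : Ω → ℝ} (hp : p ∈ stdSimplex ℝ Ω) :
    Measure.dirac p ∈ Splittings p :=
  ⟨inferInstance, Measure.dirac_apply_of_mem hp, integral_dirac _ p⟩

theorem dppPayoff_dirac (r : Ω → ℝ) (δ : ℝ) (φ : (Ω → ℝ) → Ω → ℝ) (V : (Ω → ℝ) → ℝ)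
    {p : Ω → ℝ} (hp : p ∈ stdSimplex ℝ Ω) :
    dppPayoff r δ φ V (Measure.dirac p)
      = (1 - δ) * (Measure.dirac p (invest r)).toReal + δ * V (φ p) := by
  rw [dppPayoff, restrict_stdSimplex_of_mem_splittings (dirac_mem_splittings hp), integral_dirac]

theorem twoPoint_mem_splittings {a : ℝ} (ha : a ∈ Icc (0 : ℝ) 1) {x z : Ω → ℝ}
    (hx : x ∈ stdSimplex ℝ Ω) (hz : z ∈ stdSimplex ℝ Ω) :
    twoPoint a x z ∈ Splittings (a • x + (1 - a) • z) :=
  ⟨isProbabilityMeasure_twoPoint ha x z, twoPoint_apply_of_mem ha hx hz,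
    integral_twoPoint ha x z id⟩

theorem dppPayoff_twoPoint {a : ℝ} (ha : a ∈ Icc (0 : ℝ) 1) (r : Ω → ℝ) (δ : ℝ)
    (φ : (Ω → ℝ) → Ω → ℝ) (V : (Ω → ℝ) → ℝ) {x z : Ω → ℝ}
    (hx : x ∈ stdSimplex ℝ Ω) (hz : z ∈ stdSimplex ℝ Ω) :
    dppPayoff r δ φ V (twoPoint a x z) = (1 - δ) * (twoPoint a x z (invest r)).toReal
      + δ * (a * V (φ x) + (1 - a) * V (φ z)) := by
  rw [dppPayoff, restrict_stdSimplex_of_mem_splittings (twoPoint_mem_splittings ha hx hz),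
    integral_twoPoint ha x z, smul_eq_mul, smul_eq_mul]

theorem dppPayoff_le_of_abs_le {r : Ω → ℝ} {δ : ℝ} (hδ : δ ∈ Icc (0 : ℝ) 1)
    {φ : (Ω → ℝ) → Ω → ℝ} (hφ : ∀ q ∈ stdSimplex ℝ Ω, φ q ∈ stdSimplex ℝ Ω)
    {V : (Ω → ℝ) → ℝ} {C : ℝ}
    (hV : ∀ p ∈ stdSimplex ℝ Ω, |V p| ≤ C) {p : Ω → ℝ} {μ : Measure (Ω → ℝ)}
    (hμ : μ ∈ Splittings p) : dppPayoff r δ φ V μ ≤ (1 - δ) + δ * C := by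
  have := hμ.1
  have hI : (μ (invest r)).toReal ≤ 1 := measureReal_le_one
  have hVφ : ∫ q in stdSimplex ℝ Ω, V (φ q) ∂μ ≤ C := by
    rw [restrict_stdSimplex_of_mem_splittings hμ]
    refine (le_abs_self _).trans ?_
    simpa using norm_integral_le_of_norm_le_const (μ := μ) (C := C) (f := fun q => V (φ q)) (by
      filter_upwards [ae_mem_stdSimplex_of_mem_splittings hμ] with q hq
      exact hV _ (hφ q hq))
  unfold dppPayoff
  linarith [mul_le_mul_of_nonneg_left hI (sub_nonneg.2 hδ.2),
    mul_le_mul_of_nonneg_left hVφ hδ.1]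

theorem dppPayoff_le_of_satisfiesDPP {r : Ω → ℝ} {δ : ℝ} (hδ : δ ∈ Icc (0 : ℝ) 1)
    {φ : (Ω → ℝ) → Ω → ℝ} (hφ : ∀ q ∈ stdSimplex ℝ Ω, φ q ∈ stdSimplex ℝ Ω)
    {V : (Ω → ℝ) → ℝ} {C : ℝ} (hV : ∀ p ∈ stdSimplex ℝ Ω, |V p| ≤ C)
    (hDPP : SatisfiesDPP r δ φ V) {p : Ω → ℝ} (hp : p ∈ stdSimplex ℝ Ω)
    {μ : Measure (Ω → ℝ)} (hμ : μ ∈ Splittings p) : dppPayoff r δ φ V μ ≤ V p := by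
  rw [hDPP p hp]
  exact le_csSup ⟨_, forall_mem_image.2 fun ν hν => dppPayoff_le_of_abs_le hδ hφ hV hν⟩
    (mem_image_of_mem _ hμ)

theorem homothety_mem_stdSimplex {m q : Ω → ℝ} (hm : m ∈ stdSimplex ℝ Ω)
    (hq : q ∈ stdSimplex ℝ Ω) {lam : ℝ} (hlam : lam ∈ Icc (0 : ℝ) 1) :
    m + lam • (q - m) ∈ stdSimplex ℝ Ω :=
  (convex_stdSimplex ℝ Ω).add_smul_sub_mem hm hq hlam

/-- The discounted average `(1 - δ) ∑ₜ δᵗ ⟨φᵗ p, y⟩` of `⟨·, y⟩` along the orbit of `p` under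
the homothety `φ` of center `m` and ratio `lam`. -/
def orbitValue (δ lam : ℝ) (m y p : Ω → ℝ) : ℝ :=
  m ⬝ᵥ y + (1 - δ) / (1 - δ * lam) * ((p - m) ⬝ᵥ y)

section Orbit

variable {δ lam : ℝ} {m y : Ω → ℝ}

@[simp]
theorem orbitValue_self : orbitValue δ lam m y m = m ⬝ᵥ y := by
  simp [orbitValue]

theorem orbitValue_homothety (q : Ω → ℝ) :
    orbitValue δ lam m y (m + lam • (q - m))
      = m ⬝ᵥ y + (1 - δ) / (1 - δ * lam) * lam * ((q - m) ⬝ᵥ y) := by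
  simp [orbitValue, smul_dotProduct, mul_assoc]

theorem orbitValue_eq (hδlam : δ * lam ≠ 1) (p : Ω → ℝ) :
    orbitValue δ lam m y p = (1 - δ) * (p ⬝ᵥ y) + δ * orbitValue δ lam m y (m + lam • (p - m)) := by
  rw [orbitValue_homothety, orbitValue, sub_dotProduct]
  have : 1 - δ * lam ≠ 0 := sub_ne_zero.2 hδlam.symm
  field_simp
  ring

theorem orbitValue_nonneg (hδ : δ ∈ Ico (0 : ℝ) 1) (hlam : lam ≤ 1) (hy : 0 ≤ y)
    (hm : m ∈ stdSimplex ℝ Ω) {p : Ω → ℝ} (hp : p ∈ stdSimplex ℝ Ω) :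
    0 ≤ orbitValue δ lam m y p := by
  have hnonneg : ∀ q ∈ stdSimplex ℝ Ω, 0 ≤ q ⬝ᵥ y := fun q hq =>
    Finset.sum_nonneg fun ω _ => mul_nonneg (hq.1 ω) (hy ω)
  have hδlam : δ * lam ≤ δ := mul_le_of_le_one_right hδ.1 hlam
  have hκ0 : 0 ≤ (1 - δ) / (1 - δ * lam) := div_nonneg (by linarith [hδ.2]) (by linarith [hδ.2])
  have hκ1 : (1 - δ) / (1 - δ * lam) ≤ 1 := div_le_one_of_le₀ (by linarith) (by linarith [hδ.2])
  have hconv : orbitValue δ lam m y p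
      = (1 - (1 - δ) / (1 - δ * lam)) * (m ⬝ᵥ y) + (1 - δ) / (1 - δ * lam) * (p ⬝ᵥ y) := by
    rw [orbitValue, sub_dotProduct]
    ring
  rw [hconv]
  exact add_nonneg (mul_nonneg (sub_nonneg.2 hκ1) (hnonneg m hm)) (mul_nonneg hκ0 (hnonneg p hp))

theorem exists_abs_orbitValue_le (δ lam : ℝ) (m y : Ω → ℝ) :
    ∃ C, ∀ p ∈ stdSimplex ℝ Ω, |orbitValue δ lam m y p| ≤ C :=
  (isCompact_stdSimplex ℝ Ω).exists_bound_of_continuousOn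
    (f := orbitValue δ lam m y) (by unfold orbitValue; fun_prop)

theorem dppPayoff_le_orbitValue_add {r : Ω → ℝ} (hδ : δ ∈ Ico (0 : ℝ) 1)
    (hlam : lam ∈ Icc (0 : ℝ) 1) (hm : m ∈ stdSimplex ℝ Ω) {φ : (Ω → ℝ) → Ω → ℝ}
    (hφ : ∀ p, φ p = m + lam • (p - m)) (hy : 0 ≤ y) (hyI : ∀ q ∈ invest r, 1 ≤ q ⬝ᵥ y)
    {V : (Ω → ℝ) → ℝ} {M : ℝ} (hM : 0 ≤ M)
    (hVM : ∀ q ∈ stdSimplex ℝ Ω, V q - orbitValue δ lam m y q ≤ M)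
    {p : Ω → ℝ} (hp : p ∈ stdSimplex ℝ Ω) {μ : Measure (Ω → ℝ)} (hμ : μ ∈ Splittings p) :
    dppPayoff r δ φ V μ ≤ orbitValue δ lam m y p + δ * M := by
  have := hμ.1
  have hφΔ : ∀ q ∈ stdSimplex ℝ Ω, φ q ∈ stdSimplex ℝ Ω := fun q hq =>
    hφ q ▸ homothety_mem_stdSimplex hm hq hlam
  set κ := (1 - δ) / (1 - δ * lam)
  have hW : ∀ q, orbitValue δ lam m y (φ q) + M
      = (m ⬝ᵥ y + M - κ * lam * (m ⬝ᵥ y)) + κ * lam * (q ⬝ᵥ y) := fun q => by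
    rw [hφ, orbitValue_homothety, sub_dotProduct]
    ring
  have hWint : Integrable (fun q => orbitValue δ lam m y (φ q) + M) μ := by
    simp_rw [hW]
    exact (integrable_const _).add ((integrable_dotProduct_of_mem_splittings hμ y).const_mul _)
  have hVφ : ∫ q, V (φ q) ∂μ ≤ orbitValue δ lam m y (φ p) + M := by
    by_cases hVint : Integrable (fun q => V (φ q)) μ
    · calc ∫ q, V (φ q) ∂μ ≤ ∫ q, (orbitValue δ lam m y (φ q) + M) ∂μ := by
            refine integral_mono_ae hVint hWint ?_
            filter_upwards [ae_mem_stdSimplex_of_mem_splittings hμ] with q hq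
            linarith [hVM _ (hφΔ q hq)]
        _ = orbitValue δ lam m y (φ p) + M := by
            simp_rw [hW]
            rw [integral_add (integrable_const _)
              ((integrable_dotProduct_of_mem_splittings hμ y).const_mul _),
              integral_const, integral_const_mul, integral_dotProduct_of_mem_splittings hμ y]
            simp
    · -- `V ∘ φ` need not be integrable, and then its Bochner integral is `0`.
      rw [integral_undef hVint]
      exact add_nonneg (orbitValue_nonneg hδ hlam.2 hy hm (hφΔ p hp)) hM
  have hδlam : δ * lam ≠ 1 := by nlinarith [hδ.1, hδ.2, hlam.2]
  calc dppPayoff r δ φ V μ = (1 - δ) * (μ (invest r)).toReal + δ * ∫ q, V (φ q) ∂μ := by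
        rw [dppPayoff, restrict_stdSimplex_of_mem_splittings hμ]
    _ ≤ (1 - δ) * (p ⬝ᵥ y) + δ * (orbitValue δ lam m y (φ p) + M) := by
        gcongr
        · linarith [hδ.2]
        · exact measure_invest_le_dotProduct hμ hy hyI
        · exact hδ.1
    _ = orbitValue δ lam m y p + δ * M := by
        rw [orbitValue_eq hδlam p, ← hφ p]
        ring

theorem le_orbitValue_of_satisfiesDPP {r : Ω → ℝ} (hδ : δ ∈ Ico (0 : ℝ) 1)
    (hlam : lam ∈ Icc (0 : ℝ) 1) (hm : m ∈ stdSimplex ℝ Ω) {φ : (Ω → ℝ) → Ω → ℝ}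
    (hφ : ∀ p, φ p = m + lam • (p - m)) (hy : 0 ≤ y) (hyI : ∀ q ∈ invest r, 1 ≤ q ⬝ᵥ y)
    {V : (Ω → ℝ) → ℝ} (hV : ∃ C, ∀ p ∈ stdSimplex ℝ Ω, |V p| ≤ C)
    (hDPP : SatisfiesDPP r δ φ V) :
    ∀ p ∈ stdSimplex ℝ Ω, V p ≤ orbitValue δ lam m y p := by
  refine fun p hp => sub_nonpos.1 (nonpos_of_forall_le_mul hδ.2
    (bddAbove_image_sub subset_rfl hV (exists_abs_orbitValue_le δ lam m y))
    (fun M hM hVM p hp => ?_) p hp)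
  rw [hDPP p hp, sub_le_iff_le_add']
  exact csSup_le ⟨_, mem_image_of_mem _ (dirac_mem_splittings hp)⟩ (forall_mem_image.2
    fun μ hμ => dppPayoff_le_orbitValue_add hδ hlam hm hφ hy hyI hM hVM hp hμ)

theorem eq_one_of_satisfiesDPP_of_mem_invest {r : Ω → ℝ} (hδ : δ ∈ Ico (0 : ℝ) 1)
    (hlam : lam ∈ Icc (0 : ℝ) 1) (hm : m ∈ invest r) {φ : (Ω → ℝ) → Ω → ℝ}
    (hφ : ∀ p, φ p = m + lam • (p - m))
    {V : (Ω → ℝ) → ℝ} (hV : ∃ C, ∀ p ∈ stdSimplex ℝ Ω, |V p| ≤ C)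
    (hDPP : SatisfiesDPP r δ φ V) : V m = 1 := by
  have hφΔ : ∀ q ∈ stdSimplex ℝ Ω, φ q ∈ stdSimplex ℝ Ω := fun q hq =>
    hφ q ▸ homothety_mem_stdSimplex hm.1 hq hlam
  obtain ⟨C, hC⟩ := hV
  have hge := dppPayoff_le_of_satisfiesDPP (Ico_subset_Icc_self hδ) hφΔ hC hDPP hm.1
    (dirac_mem_splittings hm.1)
  rw [dppPayoff_dirac r δ φ V hm.1, Measure.dirac_apply_of_mem hm, hφ, sub_self, smul_zero,
    add_zero, ENNReal.toReal_one, mul_one] at hge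
  have hle := le_orbitValue_of_satisfiesDPP hδ hlam hm.1 hφ (y := 1) zero_le_one
    (fun q hq => by simp [dotProduct_one, hq.1.2]) ⟨C, hC⟩ hDPP m hm.1
  rw [orbitValue_self, dotProduct_one, hm.1.2] at hle
  nlinarith [hδ.2]

end Orbit

theorem Lfun_add (k : ℕ) (p q : Ω → ℝ) : Lfun r e k (p + q) = Lfun r e k p + Lfun r e k q := by
  simp only [Lfun, Pi.add_apply, add_mul, Finset.sum_add_distrib]
  ring

theorem Lfun_smul (k : ℕ) (c : ℝ) (p : Ω → ℝ) : Lfun r e k (c • p) = c * Lfun r e k p := by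
  simp only [Lfun, Pi.smul_apply, smul_eq_mul, mul_add, Finset.mul_sum, mul_assoc]

theorem Lfun_sub (k : ℕ) (p q : Ω → ℝ) : Lfun r e k (p - q) = Lfun r e k p - Lfun r e k q := by
  simp only [Lfun, Pi.sub_apply, sub_mul, Finset.sum_sub_distrib]
  ring

theorem Lfun_succ (j : Fin K) (p : Ω → ℝ) :
    Lfun r e (j + 1) p = Lfun r e j p + p (e j) * r (e j) := by
  have h : Finset.univ.filter (fun i : Fin K => (i : ℕ) + 1 ≤ j + 1)
      = insert j (Finset.univ.filter fun i : Fin K => (i : ℕ) + 1 ≤ j) := by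
    ext i
    simp only [Finset.mem_filter, Finset.mem_univ, true_and, Finset.mem_insert, Fin.ext_iff]
    omega
  rw [Lfun, Lfun, h, Finset.sum_insert (by simp)]
  ring

theorem Lfun_zero_nonneg {p : Ω → ℝ} (hp : 0 ≤ p) : 0 ≤ Lfun r e 0 p := by
  have : Finset.univ.filter (fun i : Fin K => (i : ℕ) + 1 ≤ 0) = ∅ := by
    ext
    simp
  rw [Lfun, this, Finset.sum_empty, add_zero]
  exact Finset.sum_nonneg fun ω hω => mul_nonneg (hp ω) (Finset.mem_filter.1 hω).2

theorem Lfun_eq_of_forall_eq_zero {p : Ω → ℝ} {k k' : ℕ} (hk : k ≤ k')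
    (h : ∀ i : Fin K, k < i + 1 → i + 1 ≤ k' → p (e i) = 0) : Lfun r e k' p = Lfun r e k p := by
  refine congrArg _ (Finset.sum_subset (fun i hi => ?_) fun i hi hni => ?_).symm
  · simp only [Finset.mem_filter, Finset.mem_univ, true_and] at hi ⊢
    omega
  · simp only [Finset.mem_filter, Finset.mem_univ, true_and, not_le] at hi hni
    rw [h i hni hi, zero_mul]

theorem IsNegEnum.Lfun_eq_dotProduct (he : IsNegEnum r e) (p : Ω → ℝ) :
    Lfun r e K p = p ⬝ᵥ r := by
  have hneg : Finset.univ.filter (fun ω => ¬ 0 ≤ r ω) = Finset.univ.map ⟨e, he.injective⟩ := by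
    ext ω
    simp [he.neg_iff]
  rw [dotProduct, ← Finset.sum_filter_add_sum_filter_not _ (fun ω => 0 ≤ r ω), hneg,
    Finset.sum_map, Lfun]
  simp

/-- The simplex points `p` with `k*(p) = j + 1`, i.e. at which the greedy splitting cuts
`Ω⁻` at `ω_{j+1} = e j`. -/
def cutoffRegion (r : Ω → ℝ) (e : Fin K → Ω) (j : Fin K) : Set (Ω → ℝ) :=
  {p | p ∈ stdSimplex ℝ Ω ∧ (∀ k : ℕ, 1 ≤ k → k ≤ j → 0 < Lfun r e k p) ∧ Lfun r e (j + 1) p ≤ 0}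

theorem kstar_eq_of_mem_cutoffRegion {p : Ω → ℝ} (hp : p ∈ cutoffRegion r e j) :
    kstar r e p = j + 1 := by
  have hmem : (j : ℕ) + 1 ∈ {k : ℕ | 1 ≤ k ∧ Lfun r e k p ≤ 0} := ⟨by omega, hp.2.2⟩
  refine le_antisymm (Nat.sInf_le hmem) (le_csInf ⟨_, hmem⟩ fun k hk => ?_)
  by_contra! hkj
  exact (hk.2.trans_lt (hp.2.1 k hk.1 (by omega))).false

theorem IsNegEnum.exists_mem_cutoffRegion (he : IsNegEnum r e) {p : Ω → ℝ}
    (hp : p ∈ stdSimplex ℝ Ω) (hneg : p ⬝ᵥ r < 0) : ∃ j : Fin K, p ∈ cutoffRegion r e j := by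
  set s := {k : ℕ | 1 ≤ k ∧ Lfun r e k p ≤ 0}
  have hK : 1 ≤ K := by
    by_contra! hK0
    have := Lfun_zero_nonneg (r := r) (e := e) hp.1
    rw [show 0 = K by omega, he.Lfun_eq_dotProduct] at this
    linarith
  have hKs : K ∈ s := ⟨hK, (he.Lfun_eq_dotProduct p).le.trans hneg.le⟩
  have hmin := Nat.sInf_mem ⟨K, hKs⟩
  have hle : sInf s ≤ K := Nat.sInf_le hKs
  refine ⟨⟨sInf s - 1, by omega⟩, hp, fun k hk1 hk2 => ?_, ?_⟩
  · by_contra! hk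
    have := Nat.sInf_le (show k ∈ s from ⟨hk1, hk⟩)
    simp only at hk2
    omega
  · simpa [Nat.sub_add_cancel hmin.1] using hmin.2

theorem Lfun_nonneg_of_mem_cutoffRegion {p : Ω → ℝ} (hp : p ∈ cutoffRegion r e j) :
    0 ≤ Lfun r e j p := by
  rcases Nat.eq_zero_or_pos j with h | h
  · exact h ▸ Lfun_zero_nonneg hp.1.1
  · exact (hp.2.1 j h le_rfl).le

theorem homothety_mem_cutoffRegion {m x : Ω → ℝ} (hm : m ∈ cutoffRegion r e j) {lam : ℝ}
    (hlam : lam ∈ Ico (0 : ℝ) 1) (hx : x ∈ stdSimplex ℝ Ω)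
    (hxk : ∀ k : ℕ, 1 ≤ k → k ≤ j → 0 ≤ Lfun r e k x) (hxj : Lfun r e (j + 1) x ≤ 0) :
    m + lam • (x - m) ∈ cutoffRegion r e j := by
  have hL : ∀ k, Lfun r e k (m + lam • (x - m)) = (1 - lam) * Lfun r e k m + lam * Lfun r e k x :=
    fun k => by
      rw [Lfun_add, Lfun_smul, Lfun_sub]
      ring
  refine ⟨homothety_mem_stdSimplex hm.1 hx (Ico_subset_Icc_self hlam), fun k hk1 hk2 => ?_, ?_⟩
  · rw [hL]
    nlinarith [hm.2.1 k hk1 hk2, hxk k hk1 hk2, hlam.1, hlam.2]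
  · rw [hL]
    nlinarith [hm.2.2, hlam.1, hlam.2]

theorem IsNegEnum.one_le_dotProduct_dualVec (he : IsNegEnum r e) {q : Ω → ℝ}
    (hq : q ∈ invest r) : 1 ≤ q ⬝ᵥ dualVec r e j := by
  have hlin : q ⬝ᵥ (fun ω => 1 - r ω / r (e j)) = 1 - q ⬝ᵥ r / r (e j) := by
    simp only [dotProduct, mul_sub, mul_one, Finset.sum_sub_distrib, hq.1.2, Finset.sum_div,
      mul_div_assoc]
  have hdiv : q ⬝ᵥ r / r (e j) ≤ 0 := div_nonpos_of_nonneg_of_nonpos hq.2 (he.payoff_neg j).le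
  calc 1 ≤ q ⬝ᵥ (fun ω => 1 - r ω / r (e j)) := by linarith
    _ ≤ q ⬝ᵥ dualVec r e j :=
      Finset.sum_le_sum fun ω _ => mul_le_mul_of_nonneg_left (le_max_left _ _) (hq.1.1 ω)

variable [DecidableEq Ω]

theorem IsNegEnum.piStar_of_nonneg (he : IsNegEnum r e) (p : Ω → ℝ) {ω : Ω} (hω : 0 ≤ r ω) :
    piStar r e p ω = p ω := by
  have hne : ∀ i, ω ≠ e i := fun i h => (h ▸ hω).not_gt (he.payoff_neg i)
  simp only [piStar, Pi.add_apply, Finset.sum_apply, Pi.smul_apply, smul_eq_mul, if_pos hω,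
    Pi.single_eq_of_ne (hne _), mul_zero, Finset.sum_const_zero, add_zero]

theorem IsNegEnum.piStar_apply (he : IsNegEnum r e) {p : Ω → ℝ} (hp : p ∈ cutoffRegion r e j)
    (i : Fin K) :
    piStar r e p (e i) = if i < j then p (e i)
      else if i = j then -Lfun r e j p / r (e j) else 0 := by
  have hsingle : ∀ i' : Fin K, (Pi.single (e i') 1 : Ω → ℝ) (e i) = if i = i' then 1 else 0 :=
    fun i' => by simp [Pi.single_apply, he.injective.eq_iff]
  simp only [piStar, Pi.add_apply, Finset.sum_apply, Pi.smul_apply, smul_eq_mul, hsingle,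
    mul_ite, mul_one, mul_zero, Finset.sum_ite_eq, Finset.mem_univ, if_true,
    if_neg (he.payoff_neg i).not_ge, zero_add, kstar_eq_of_mem_cutoffRegion hp,
    Nat.add_sub_cancel, Nat.add_right_cancel_iff, Fin.lt_def, ← Fin.ext_iff]
  split_ifs <;> simp_all

theorem IsNegEnum.piStar_nonneg (he : IsNegEnum r e) {p : Ω → ℝ}
    (hp : p ∈ cutoffRegion r e j) : 0 ≤ piStar r e p := by
  intro ω
  rcases he.nonneg_or_exists_eq ω with hω | ⟨i, rfl⟩
  · simpa [he.piStar_of_nonneg p hω] using hp.1.1 ω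
  · rw [he.piStar_apply hp]
    split_ifs
    · exact hp.1.1 _
    · exact div_nonneg_of_nonpos (neg_nonpos.2 (Lfun_nonneg_of_mem_cutoffRegion hp))
        (he.payoff_neg j).le
    · exact le_rfl

theorem IsNegEnum.piStar_le (he : IsNegEnum r e) {p : Ω → ℝ}
    (hp : p ∈ cutoffRegion r e j) : piStar r e p ≤ p := by
  intro ω
  rcases he.nonneg_or_exists_eq ω with hω | ⟨i, rfl⟩
  · exact (he.piStar_of_nonneg p hω).le
  · rw [he.piStar_apply hp]
    split_ifs with _ hij
    · exact le_rfl
    · subst hij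
      rw [div_le_iff_of_neg (he.payoff_neg i)]
      linarith [Lfun_succ (r := r) i p ▸ hp.2.2]
    · exact hp.1.1 _

theorem IsNegEnum.Lfun_piStar (he : IsNegEnum r e) {p : Ω → ℝ}
    (hp : p ∈ cutoffRegion r e j) {k : ℕ} (hk : k ≤ j) :
    Lfun r e k (piStar r e p) = Lfun r e k p := by
  unfold Lfun
  congr 1
  · exact Finset.sum_congr rfl fun ω hω => by
      rw [he.piStar_of_nonneg p (Finset.mem_filter.1 hω).2]
  · refine Finset.sum_congr rfl fun i hi => ?_
    rw [he.piStar_apply hp, if_pos]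
    have := (Finset.mem_filter.1 hi).2
    rw [Fin.lt_def]
    omega

theorem IsNegEnum.Lfun_piStar_succ (he : IsNegEnum r e) {p : Ω → ℝ}
    (hp : p ∈ cutoffRegion r e j) : Lfun r e (j + 1) (piStar r e p) = 0 := by
  rw [Lfun_succ, he.Lfun_piStar hp le_rfl, he.piStar_apply hp, if_neg (lt_irrefl j), if_pos rfl,
    div_mul_cancel₀ _ (he.payoff_neg j).ne]
  ring

theorem IsNegEnum.piStar_dotProduct (he : IsNegEnum r e) {p : Ω → ℝ}
    (hp : p ∈ cutoffRegion r e j) : piStar r e p ⬝ᵥ r = 0 := by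
  rw [← he.Lfun_eq_dotProduct, ← he.Lfun_piStar_succ hp]
  refine Lfun_eq_of_forall_eq_zero j.isLt fun i hji _ => ?_
  rw [he.piStar_apply hp, if_neg (by rw [Fin.lt_def]; omega), if_neg (by rw [Fin.ext_iff]; omega)]

theorem IsNegEnum.piStar_dotProduct_dualVec (he : IsNegEnum r e) {p : Ω → ℝ}
    (hp : p ∈ cutoffRegion r e j) : piStar r e p ⬝ᵥ dualVec r e j = aI r e p := by
  have hsupp : ∀ ω, piStar r e p ω * dualVec r e j ω
      = piStar r e p ω * (1 - r ω / r (e j)) := fun ω => by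
    rcases he.nonneg_or_exists_eq ω with hω | ⟨i, rfl⟩
    · rw [he.dualVec_of_ge ((he.payoff_neg j).le.trans hω)]
    · by_cases hij : i ≤ j
      · rw [he.dualVec_of_ge (he.antitone hij)]
      · rw [he.piStar_apply hp, if_neg (by omega), if_neg (by omega)]
        simp
  simp only [dotProduct, hsupp, mul_sub, mul_one, Finset.sum_sub_distrib, ← mul_div_assoc,
    ← Finset.sum_div]
  rw [show ∑ ω, piStar r e p ω * r ω = 0 from he.piStar_dotProduct hp, zero_div, sub_zero, aI]

theorem IsNegEnum.sub_piStar_dotProduct_dualVec (he : IsNegEnum r e) {p : Ω → ℝ}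
    (hp : p ∈ cutoffRegion r e j) : (p - piStar r e p) ⬝ᵥ dualVec r e j = 0 := by
  refine Finset.sum_eq_zero fun ω _ => ?_
  rcases he.nonneg_or_exists_eq ω with hω | ⟨i, rfl⟩
  · simp [he.piStar_of_nonneg p hω]
  · by_cases hij : i < j
    · simp [he.piStar_apply hp, hij]
    · simp [he.dualVec_of_le (he.antitone (not_lt.1 hij))]

theorem IsNegEnum.dotProduct_dualVec (he : IsNegEnum r e) {p : Ω → ℝ}
    (hp : p ∈ cutoffRegion r e j) : p ⬝ᵥ dualVec r e j = aI r e p := by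
  rw [← he.piStar_dotProduct_dualVec hp, ← sub_eq_zero, ← sub_dotProduct,
    he.sub_piStar_dotProduct_dualVec hp]

theorem IsNegEnum.aI_nonneg (he : IsNegEnum r e) {p : Ω → ℝ} (hp : p ∈ cutoffRegion r e j) :
    0 ≤ aI r e p :=
  Finset.sum_nonneg fun ω _ => he.piStar_nonneg hp ω

theorem IsNegEnum.aI_le_one (he : IsNegEnum r e) {p : Ω → ℝ} (hp : p ∈ cutoffRegion r e j) :
    aI r e p ≤ 1 :=
  hp.1.2 ▸ Finset.sum_le_sum fun ω _ => he.piStar_le hp ω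

theorem IsNegEnum.piStar_eq_zero (he : IsNegEnum r e) {p : Ω → ℝ}
    (hp : p ∈ cutoffRegion r e j) (ha : aI r e p = 0) : piStar r e p = 0 :=
  funext fun ω => (Finset.sum_eq_zero_iff_of_nonneg fun ω _ => he.piStar_nonneg hp ω).1 ha ω
    (Finset.mem_univ ω)

theorem IsNegEnum.aI_lt_one (he : IsNegEnum r e) {p : Ω → ℝ} (hp : p ∈ cutoffRegion r e j)
    (hneg : p ⬝ᵥ r < 0) : aI r e p < 1 := by
  have hsum : ∑ ω, (p ω - piStar r e p ω) = 1 - aI r e p := by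
    rw [Finset.sum_sub_distrib, hp.1.2, aI]
  have hnonneg : ∀ ω ∈ Finset.univ, 0 ≤ p ω - piStar r e p ω :=
    fun ω _ => sub_nonneg.2 (he.piStar_le hp ω)
  refine lt_of_le_of_ne (by linarith [Finset.sum_nonneg hnonneg]) fun ha => ?_
  have hπ : piStar r e p = p := funext fun ω => by
    linarith [(Finset.sum_eq_zero_iff_of_nonneg hnonneg).1 (by linarith) ω (Finset.mem_univ ω)]
  linarith [hπ ▸ he.piStar_dotProduct hp]

theorem IsNegEnum.aI_smul_qI (he : IsNegEnum r e) {p : Ω → ℝ} (hp : p ∈ cutoffRegion r e j) :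
    aI r e p • qI r e p = piStar r e p := by
  rcases eq_or_ne (aI r e p) 0 with ha | ha
  · simp [qI, ha, he.piStar_eq_zero hp ha]
  · exact smul_inv_smul₀ ha _

theorem one_sub_aI_smul_qJ {p : Ω → ℝ} (ha : aI r e p < 1) :
    (1 - aI r e p) • qJ r e p = p - piStar r e p :=
  smul_inv_smul₀ (sub_ne_zero.2 ha.ne') _

theorem IsNegEnum.aI_smul_qI_add_smul_qJ (he : IsNegEnum r e) {p : Ω → ℝ}
    (hp : p ∈ cutoffRegion r e j) (ha : aI r e p < 1) :
    aI r e p • qI r e p + (1 - aI r e p) • qJ r e p = p := by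
  rw [he.aI_smul_qI hp, one_sub_aI_smul_qJ ha, add_sub_cancel]

theorem IsNegEnum.qI_mem_invest (he : IsNegEnum r e) {p : Ω → ℝ}
    (hp : p ∈ cutoffRegion r e j) (ha : 0 < aI r e p) : qI r e p ∈ invest r := by
  refine ⟨⟨fun ω => mul_nonneg (inv_nonneg.2 ha.le) (he.piStar_nonneg hp ω), ?_⟩, ?_⟩
  · simp only [qI, Pi.smul_apply, smul_eq_mul, ← Finset.mul_sum]
    exact inv_mul_cancel₀ ha.ne'
  · show 0 ≤ qI r e p ⬝ᵥ r
    rw [qI, smul_dotProduct, he.piStar_dotProduct hp, smul_zero]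

theorem IsNegEnum.qJ_mem_stdSimplex (he : IsNegEnum r e) {p : Ω → ℝ}
    (hp : p ∈ cutoffRegion r e j) (ha : aI r e p < 1) : qJ r e p ∈ stdSimplex ℝ Ω := by
  refine ⟨fun ω => mul_nonneg (inv_nonneg.2 (sub_nonneg.2 ha.le))
    (sub_nonneg.2 (he.piStar_le hp ω)), ?_⟩
  simp only [qJ, Pi.smul_apply, Pi.sub_apply, smul_eq_mul, ← Finset.mul_sum,
    Finset.sum_sub_distrib, hp.1.2]
  exact inv_mul_cancel₀ (sub_ne_zero.2 ha.ne')

theorem IsNegEnum.qI_dotProduct_dualVec (he : IsNegEnum r e) {p : Ω → ℝ}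
    (hp : p ∈ cutoffRegion r e j) (ha : 0 < aI r e p) : qI r e p ⬝ᵥ dualVec r e j = 1 := by
  rw [qI, smul_dotProduct, he.piStar_dotProduct_dualVec hp, smul_eq_mul, inv_mul_cancel₀ ha.ne']

theorem IsNegEnum.qJ_dotProduct_dualVec (he : IsNegEnum r e) {p : Ω → ℝ}
    (hp : p ∈ cutoffRegion r e j) : qJ r e p ⬝ᵥ dualVec r e j = 0 := by
  rw [qJ, smul_dotProduct, he.sub_piStar_dotProduct_dualVec hp, smul_zero]

theorem IsNegEnum.homothety_qI_mem_cutoffRegion (he : IsNegEnum r e) {m p : Ω → ℝ}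
    (hm : m ∈ cutoffRegion r e j) {lam : ℝ} (hlam : lam ∈ Ico (0 : ℝ) 1)
    (hp : p ∈ cutoffRegion r e j) (ha : 0 < aI r e p) :
    m + lam • (qI r e p - m) ∈ cutoffRegion r e j := by
  refine homothety_mem_cutoffRegion hm hlam (he.qI_mem_invest hp ha).1 (fun k hk1 hk2 => ?_) ?_
  · rw [qI, Lfun_smul, he.Lfun_piStar hp hk2]
    exact mul_nonneg (inv_nonneg.2 ha.le) (hp.2.1 k hk1 hk2).le
  · rw [qI, Lfun_smul, he.Lfun_piStar_succ hp, mul_zero]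

theorem IsNegEnum.homothety_qJ_mem_cutoffRegion (he : IsNegEnum r e) {m p : Ω → ℝ}
    (hm : m ∈ cutoffRegion r e j) {lam : ℝ} (hlam : lam ∈ Ico (0 : ℝ) 1)
    (hp : p ∈ cutoffRegion r e j) (ha : aI r e p < 1) :
    m + lam • (qJ r e p - m) ∈ cutoffRegion r e j := by
  refine homothety_mem_cutoffRegion hm hlam (he.qJ_mem_stdSimplex hp ha) (fun k _ hk2 => ?_) ?_
  · rw [qJ, Lfun_smul, Lfun_sub, he.Lfun_piStar hp hk2, sub_self, mul_zero]
  · rw [qJ, Lfun_smul, Lfun_sub, he.Lfun_piStar_succ hp, sub_zero]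
    exact mul_nonpos_of_nonneg_of_nonpos (inv_nonneg.2 (sub_nonneg.2 ha.le)) hp.2.2

/-- `γ` is a greedy payoff exactly when `γ = greedyPayoff r e δ φ γ` on `Δ(Ω)`. -/
def greedyPayoff (r : Ω → ℝ) (e : Fin K → Ω) (δ : ℝ) (φ : (Ω → ℝ) → Ω → ℝ)
    (U : (Ω → ℝ) → ℝ) (p : Ω → ℝ) : ℝ :=
  if 0 ≤ p ⬝ᵥ r then (1 - δ) + δ * U (φ p)
  else aI r e p * ((1 - δ) + δ * U (φ (qI r e p))) + (1 - aI r e p) * (δ * U (φ (qJ r e p)))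

variable {m : Ω → ℝ} {δ lam : ℝ} {φ : (Ω → ℝ) → Ω → ℝ}

theorem IsNegEnum.greedyPayoff_sub_le (he : IsNegEnum r e) (hm : m ∈ cutoffRegion r e j)
    (hlam : lam ∈ Ico (0 : ℝ) 1) (hφ : ∀ p, φ p = m + lam • (p - m)) (hδ : 0 ≤ δ)
    {U U' : (Ω → ℝ) → ℝ} {M : ℝ}
    (hUM : ∀ q ∈ cutoffRegion r e j, U q - U' q ≤ M) {p : Ω → ℝ}
    (hp : p ∈ cutoffRegion r e j) :
    greedyPayoff r e δ φ U p - greedyPayoff r e δ φ U' p ≤ δ * M := by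
  unfold greedyPayoff
  split_ifs with hpr
  · have := hUM _ (hφ p ▸ homothety_mem_cutoffRegion hm hlam hp.1
      (fun k hk1 hk2 => (hp.2.1 k hk1 hk2).le) hp.2.2)
    nlinarith
  · have ha1 := he.aI_lt_one hp (not_le.1 hpr)
    have hI : aI r e p * (U (φ (qI r e p)) - U' (φ (qI r e p))) ≤ aI r e p * M := by
      rcases (he.aI_nonneg hp).eq_or_lt with ha | ha
      · simp [← ha]
      · exact mul_le_mul_of_nonneg_left
          (hUM _ (hφ _ ▸ he.homothety_qI_mem_cutoffRegion hm hlam hp ha)) ha.le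
    have hJ := mul_le_mul_of_nonneg_left
      (hUM _ (hφ _ ▸ he.homothety_qJ_mem_cutoffRegion hm hlam hp ha1)) (sub_nonneg.2 ha1.le)
    nlinarith

theorem IsNegEnum.le_of_le_greedyPayoff (he : IsNegEnum r e) (hm : m ∈ cutoffRegion r e j)
    (hlam : lam ∈ Ico (0 : ℝ) 1) (hφ : ∀ p, φ p = m + lam • (p - m)) (hδ : δ ∈ Ico (0 : ℝ) 1)
    {U U' : (Ω → ℝ) → ℝ} (hUb : ∃ C, ∀ p ∈ stdSimplex ℝ Ω, |U p| ≤ C)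
    (hU'b : ∃ C, ∀ p ∈ stdSimplex ℝ Ω, |U' p| ≤ C)
    (hU : ∀ p ∈ cutoffRegion r e j, U p ≤ greedyPayoff r e δ φ U p)
    (hU' : ∀ p ∈ cutoffRegion r e j, greedyPayoff r e δ φ U' p ≤ U' p) :
    ∀ p ∈ cutoffRegion r e j, U p ≤ U' p := by
  refine fun p hp => sub_nonpos.1 (nonpos_of_forall_le_mul hδ.2
    (bddAbove_image_sub (fun q hq => hq.1) hUb hU'b) (fun M _ hUM q hq => ?_) p hp)
  linarith [hU q hq, hU' q hq, he.greedyPayoff_sub_le hm hlam hφ hδ.1 hUM hq]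

theorem IsNegEnum.greedyPayoff_orbitValue (he : IsNegEnum r e) (hφ : ∀ p, φ p = m + lam • (p - m))
    (hδlam : δ * lam ≠ 1) {p : Ω → ℝ} (hp : p ∈ cutoffRegion r e j) :
    greedyPayoff r e δ φ (orbitValue δ lam m (dualVec r e j)) p
      = orbitValue δ lam m (dualVec r e j) p := by
  have hpy := he.dotProduct_dualVec hp
  rw [orbitValue_eq hδlam p, greedyPayoff]
  simp only [hφ, orbitValue_homothety, sub_dotProduct]
  split_ifs with hpr
  · have : p ⬝ᵥ dualVec r e j = 1 :=
      le_antisymm (hpy ▸ he.aI_le_one hp) (he.one_le_dotProduct_dualVec ⟨hp.1, hpr⟩)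
    rw [this]
    ring
  · have hqI : aI r e p * (qI r e p ⬝ᵥ dualVec r e j) = aI r e p := by
      rcases (he.aI_nonneg hp).eq_or_lt with ha | ha
      · simp [← ha]
      · rw [he.qI_dotProduct_dualVec hp ha, mul_one]
    have hqJ := he.qJ_dotProduct_dualVec hp
    set κ := (1 - δ) / (1 - δ * lam)
    linear_combination δ * κ * lam * hqI + (1 - aI r e p) * δ * κ * lam * hqJ
      - ((1 - δ) + δ * κ * lam) * hpy

theorem IsNegEnum.greedyPayoff_le_of_satisfiesDPP (he : IsNegEnum r e) (hδ : δ ∈ Icc (0 : ℝ) 1)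
    (hφ : ∀ q ∈ stdSimplex ℝ Ω, φ q ∈ stdSimplex ℝ Ω) {V : (Ω → ℝ) → ℝ}
    (hV : ∃ C, ∀ p ∈ stdSimplex ℝ Ω, |V p| ≤ C) (hDPP : SatisfiesDPP r δ φ V) {p : Ω → ℝ}
    (hp : p ∈ stdSimplex ℝ Ω) : greedyPayoff r e δ φ V p ≤ V p := by
  obtain ⟨C, hC⟩ := hV
  have hdirac := dppPayoff_le_of_satisfiesDPP hδ hφ hC hDPP hp (dirac_mem_splittings hp)
  rw [dppPayoff_dirac r δ φ V hp] at hdirac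
  unfold greedyPayoff
  split_ifs with hpr
  · rwa [Measure.dirac_apply_of_mem (show p ∈ invest r from ⟨hp, hpr⟩), ENNReal.toReal_one,
      mul_one] at hdirac
  obtain ⟨j, hpT⟩ := he.exists_mem_cutoffRegion hp (not_le.1 hpr)
  have ha1 := he.aI_lt_one hpT (not_le.1 hpr)
  rcases (he.aI_nonneg hpT).eq_or_lt with ha | ha
  · have hqJ : qJ r e p = p := by simp [qJ, ← ha, he.piStar_eq_zero hpT ha.symm]
    rw [← ha, hqJ]
    nlinarith [ENNReal.toReal_nonneg (a := Measure.dirac p (invest r)), hδ.2]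
  · have hμ := twoPoint_mem_splittings ⟨ha.le, ha1.le⟩ (he.qI_mem_invest hpT ha).1
      (he.qJ_mem_stdSimplex hpT ha1)
    rw [he.aI_smul_qI_add_smul_qJ hpT ha1] at hμ
    have htwo := dppPayoff_le_of_satisfiesDPP hδ hφ hC hDPP hp hμ
    rw [dppPayoff_twoPoint ⟨ha.le, ha1.le⟩ r δ φ V (he.qI_mem_invest hpT ha).1
      (he.qJ_mem_stdSimplex hpT ha1)] at htwo
    nlinarith [le_twoPoint_apply ⟨ha.le, ha1.le⟩ (qJ r e p) (he.qI_mem_invest hpT ha), hδ.2]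

theorem IsNegEnum.eq_orbitValue_of_satisfiesDPP (he : IsNegEnum r e)
    (hm : m ∈ cutoffRegion r e j) (hlam : lam ∈ Ico (0 : ℝ) 1)
    (hφ : ∀ p, φ p = m + lam • (p - m)) (hδ : δ ∈ Ico (0 : ℝ) 1) {V : (Ω → ℝ) → ℝ}
    (hV : ∃ C, ∀ p ∈ stdSimplex ℝ Ω, |V p| ≤ C) (hDPP : SatisfiesDPP r δ φ V) :
    ∀ p ∈ cutoffRegion r e j, V p = orbitValue δ lam m (dualVec r e j) p := by
  have hφΔ : ∀ q ∈ stdSimplex ℝ Ω, φ q ∈ stdSimplex ℝ Ω := fun q hq =>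
    hφ q ▸ homothety_mem_stdSimplex hm.1 hq (Ico_subset_Icc_self hlam)
  have hδlam : δ * lam ≠ 1 := by nlinarith [hδ.1, hδ.2, hlam.1, hlam.2]
  have hle := le_orbitValue_of_satisfiesDPP hδ (Ico_subset_Icc_self hlam) hm.1 hφ
    (dualVec_nonneg (j := j)) (fun q hq => he.one_le_dotProduct_dualVec hq) hV hDPP
  have hge := he.le_of_le_greedyPayoff hm hlam hφ hδ (exists_abs_orbitValue_le _ _ _ _) hV
    (fun p hp => (he.greedyPayoff_orbitValue hφ hδlam hp).ge)
    (fun p hp => he.greedyPayoff_le_of_satisfiesDPP (Ico_subset_Icc_self hδ) hφΔ hV hDPP hp.1)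
  exact fun p hp => le_antisymm (hle p hp.1) (hge p hp)

theorem IsNegEnum.eq_orbitValue_of_eq_greedyPayoff (he : IsNegEnum r e)
    (hm : m ∈ cutoffRegion r e j) (hlam : lam ∈ Ico (0 : ℝ) 1)
    (hφ : ∀ p, φ p = m + lam • (p - m)) (hδ : δ ∈ Ico (0 : ℝ) 1) {γ : (Ω → ℝ) → ℝ}
    (hγb : ∃ C, ∀ p ∈ stdSimplex ℝ Ω, |γ p| ≤ C)
    (hγ : ∀ p ∈ cutoffRegion r e j, γ p = greedyPayoff r e δ φ γ p) :
    ∀ p ∈ cutoffRegion r e j, γ p = orbitValue δ lam m (dualVec r e j) p := by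
  have hδlam : δ * lam ≠ 1 := by nlinarith [hδ.1, hδ.2, hlam.1, hlam.2]
  have hW := fun p (hp : p ∈ cutoffRegion r e j) => he.greedyPayoff_orbitValue hφ hδlam hp
  have hWb := exists_abs_orbitValue_le δ lam m (dualVec r e j)
  have hle := he.le_of_le_greedyPayoff hm hlam hφ hδ hγb hWb (fun p hp => (hγ p hp).le)
    (fun p hp => (hW p hp).le)
  have hge := he.le_of_le_greedyPayoff hm hlam hφ hδ hWb hγb (fun p hp => (hW p hp).ge)
    (fun p hp => (hγ p hp).ge)
  exact fun p hp => le_antisymm (hle p hp) (hge p hp)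

end GreedySplitting

theorem greedy_optimal_at_invariant_general [Fintype Ω] [DecidableEq Ω] {K : ℕ}
    (r : Ω → ℝ) (e : Fin K → Ω)
    (he_inj : Function.Injective e)
    (he_range : ∀ ω, r ω < 0 ↔ ω ∈ Set.range e)
    (he_anti : Antitone fun i => r (e i))
    (δ : ℝ) (hδ : δ ∈ Ico (0 : ℝ) 1)
    (m : Ω → ℝ) (hm : m ∈ stdSimplex ℝ Ω)
    (lam : ℝ) (hlam : lam ∈ Ico (0 : ℝ) 1)
    (φ : (Ω → ℝ) → Ω → ℝ) (hφ : ∀ p, φ p = m + lam • (p - m))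
    (γ : (Ω → ℝ) → ℝ)
    (hγb : ∃ C, ∀ p ∈ stdSimplex ℝ Ω, |γ p| ≤ C)
    (hγI : ∀ p ∈ invest r, γ p = (1 - δ) + δ * γ (φ p))
    (hγJ : ∀ p ∈ stdSimplex ℝ Ω, ∑ ω, p ω * r ω < 0 →
      γ p = aI r e p * ((1 - δ) + δ * γ (φ (qI r e p)))
        + (1 - aI r e p) * (δ * γ (φ (qJ r e p)))) :
    ∀ V : (Ω → ℝ) → ℝ, (∃ C, ∀ p ∈ stdSimplex ℝ Ω, |V p| ≤ C) →
      SatisfiesDPP r δ φ V → V m = γ m := by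
  open GreedySplitting in
  intro V hV hDPP
  have he : IsNegEnum r e := ⟨he_inj, he_range, he_anti⟩
  by_cases hmr : 0 ≤ m ⬝ᵥ r
  · have hγm := hγI m ⟨hm, hmr⟩
    rw [hφ, sub_self, smul_zero, add_zero] at hγm
    rw [eq_one_of_satisfiesDPP_of_mem_invest hδ (Ico_subset_Icc_self hlam) ⟨hm, hmr⟩ hφ hV hDPP]
    nlinarith [hδ.2]
  · obtain ⟨j, hmT⟩ := he.exists_mem_cutoffRegion hm (not_le.1 hmr)
    have hγ : ∀ p ∈ cutoffRegion r e j, γ p = greedyPayoff r e δ φ γ p := fun p hp => by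
      unfold greedyPayoff
      split_ifs with hpr
      exacts [hγI p ⟨hp.1, hpr⟩, hγJ p hp.1 (not_le.1 hpr)]
    rw [he.eq_orbitValue_of_satisfiesDPP hmT hlam hφ hδ hV hDPP m hmT,
      he.eq_orbitValue_of_eq_greedyPayoff hmT hlam hφ hδ hγb hγ m hmT]

/-- when `φ` is the homothety with center the invariant distribution `m` and
ratio `λ ∈ [0,1)`, the greedy strategy is optimal for the initial distribution `m`: every
bounded solution `V` of the dynamic programming equation satisfies `V(m) = γ(m)`, where `γ`
is the greedy payoff. -/
theorem greedy_optimal_at_invariant [Fintype Ω] [DecidableEq Ω] [Nonempty Ω] {K : ℕ}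
    (r : Ω → ℝ) (e : Fin K → Ω)
    (hK : 0 < K) (hplus : ∃ ω, 0 ≤ r ω)
    (he_inj : Function.Injective e)
    (he_range : ∀ ω, r ω < 0 ↔ ω ∈ Set.range e)
    (he_anti : Antitone fun i => r (e i))
    (δ : ℝ) (hδ : δ ∈ Ico (0 : ℝ) 1)
    (m : Ω → ℝ) (hm : m ∈ stdSimplex ℝ Ω)
    (lam : ℝ) (hlam : lam ∈ Ico (0 : ℝ) 1)
    (φ : (Ω → ℝ) → Ω → ℝ) (hφ : ∀ p, φ p = m + lam • (p - m))
    (γ : (Ω → ℝ) → ℝ)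
    (hγb : ∃ C, ∀ p ∈ stdSimplex ℝ Ω, |γ p| ≤ C)
    (hγI : ∀ p ∈ invest r, γ p = (1 - δ) + δ * γ (φ p))
    (hγJ : ∀ p ∈ stdSimplex ℝ Ω, ∑ ω, p ω * r ω < 0 →
      γ p = aI r e p * ((1 - δ) + δ * γ (φ (qI r e p)))
        + (1 - aI r e p) * (δ * γ (φ (qJ r e p)))) :
    ∀ V : (Ω → ℝ) → ℝ, (∃ C, ∀ p ∈ stdSimplex ℝ Ω, |V p| ≤ C) →
      SatisfiesDPP r δ φ V → V m = γ m :=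
  greedy_optimal_at_invariant_general r e he_inj he_range he_anti δ hδ m hm lam hlam φ hφ γ hγb hγI
    hγJ

end
end

section
/- Suppose φ is the homothety with center m ∈ Δ(Ω) and ratio λ ∈ [0,1), and suppose m ∈ Ō(k) for some 1 ≤ k ≤ K. Then for every p ∈ Ō(k), the greedy payoff achieves the first-best upper bound: γ(p) = γ*(p) := (1−δ)·Σ_{n=0}^∞ δ^n · r̂(φ^{(n)}(p)). Consequently, every bounded function V satisfying the dynamic programming equation satisfies V(p) = γ(p) for every p ∈ Ō(k); in particular the greedy strategy is optimal whenever the initial distribution belongs to Ō(k). -/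
open MeasureTheory Set

noncomputable section

variable {Ω : Type*}

/-- `r̂(p) = sup_{μ ∈ S(p)} μ(I)`, the best current payoff at belief `p`. -/
def rhat [Fintype Ω] (r : Ω → ℝ) (p : Ω → ℝ) : ℝ :=
  sSup ((fun μ : Measure (Ω → ℝ) => (μ (invest r)).toReal) '' Splittings p)

/-- The set `Ō(k) = {p ∈ Δ(Ω) : L_{k−1}(p) ≥ 0 ≥ L_k(p)}`. -/
def Obar [Fintype Ω] (r : Ω → ℝ) {K : ℕ} (e : Fin K → Ω) (k : ℕ) : Set (Ω → ℝ) :=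
  {p | p ∈ stdSimplex ℝ Ω ∧ 0 ≤ Lfun r e (k - 1) p ∧ Lfun r e k p ≤ 0}

/-! Fix `ρ := r(ω_k) < 0`. The linear function `ℓ(q) := Σ_ω q(ω) max(0, 1 − r(ω)/ρ)` satisfies
`ℓ ≥ 1` on `I` and `ℓ ≥ 0` on `Δ(Ω)`, so `μ(I) ≤ ℓ(p)` for every splitting `μ ∈ S(p)` and
`r̂ ≤ ℓ`. For `p ∈ Ō(k)` the greedy posteriors satisfy `ℓ(q_I) = 1`, `ℓ(q_J) = 0`, `q_I ∈ I`, and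
both lie in `Ō(k)` (when their weight is nonzero); hence `r̂(p) = ℓ(p) = a_I`.

`Ō(k)` is convex and contains the center `m`, so it is `φ`-invariant, and on it
`γ*(p) = (1−δ) Σ δⁿ ℓ(φⁿ p)` has the affine closed form
`g(q) = ℓ(m) + (1−δ)/(1−δλ) (ℓ(q) − ℓ(m))`. This `g` satisfies `g = (1−δ) ℓ + δ g ∘ φ` on all
of `Δ(Ω)`, and also the greedy recursion on `Ō(k)`. The greedy recursion is a `δ`-contraction
on bounded functions on `Ō(k)`, which gives `γ = g` there. A bounded solution `V` of the dynamic
programming equation is a supersolution of the greedy recursion (split greedily), so `g ≤ V` on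
`Ō(k)`. Conversely, every splitting pays at most `(1−δ) ℓ(p) + δ (g(φ p) + M)` when
`V ≤ g + M`, so `V ≤ g` on `Δ(Ω)` by the same contraction argument. -/

section Lfun

variable [Fintype Ω] {K : ℕ} (r : Ω → ℝ) (e : Fin K → Ω)

lemma Lfun_add (n : ℕ) (x y : Ω → ℝ) : Lfun r e n (x + y) = Lfun r e n x + Lfun r e n y := by
  simp only [Lfun, Pi.add_apply, add_mul, Finset.sum_add_distrib]
  ring

lemma Lfun_smul (n : ℕ) (a : ℝ) (x : Ω → ℝ) : Lfun r e n (a • x) = a * Lfun r e n x := by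
  simp only [Lfun, Pi.smul_apply, smul_eq_mul, Finset.mul_sum, mul_add, mul_assoc]

lemma Lfun_sub (n : ℕ) (x y : Ω → ℝ) : Lfun r e n (x - y) = Lfun r e n x - Lfun r e n y := by
  simp only [Lfun, Pi.sub_apply, sub_mul, Finset.sum_sub_distrib]
  ring

lemma Lfun_succ (j : Fin K) (p : Ω → ℝ) :
    Lfun r e (j + 1) p = Lfun r e j p + p (e j) * r (e j) := by
  have : Finset.univ.filter (fun i : Fin K => (i : ℕ) + 1 ≤ j + 1)
      = insert j (Finset.univ.filter (fun i : Fin K => (i : ℕ) + 1 ≤ j)) := by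
    ext i
    simp only [Finset.mem_filter, Finset.mem_univ, true_and, Finset.mem_insert, Fin.ext_iff]
    omega
  rw [Lfun, Lfun, this, Finset.sum_insert (by simp)]
  ring

lemma Lfun_congr {n : ℕ} {v w : Ω → ℝ} (hpos : ∀ ω, 0 ≤ r ω → v ω = w ω)
    (henum : ∀ j : Fin K, (j : ℕ) + 1 ≤ n → v (e j) = w (e j)) :
    Lfun r e n v = Lfun r e n w := by
  unfold Lfun
  congr 1
  · exact Finset.sum_congr rfl fun ω hω => by rw [hpos ω (Finset.mem_filter.1 hω).2]
  · exact Finset.sum_congr rfl fun j hj => by rw [henum j (Finset.mem_filter.1 hj).2]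

lemma Lfun_eq_of_le {n n' : ℕ} (h : n ≤ n') {v : Ω → ℝ}
    (hv : ∀ j : Fin K, n < (j : ℕ) + 1 → (j : ℕ) + 1 ≤ n' → v (e j) = 0) :
    Lfun r e n' v = Lfun r e n v := by
  unfold Lfun
  congr 1
  refine (Finset.sum_subset (fun j hj => ?_) fun j hj hjn => ?_).symm
  · simp only [Finset.mem_filter, Finset.mem_univ, true_and] at hj ⊢
    omega
  · simp only [Finset.mem_filter, Finset.mem_univ, true_and, not_le] at hj hjn
    rw [hv j hjn hj, zero_mul]

lemma Lfun_antitone (hneg : ∀ j, r (e j) < 0) {p : Ω → ℝ} (hp : 0 ≤ p) :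
    Antitone fun n => Lfun r e n p := by
  intro n n' h
  refine add_le_add_right (Finset.sum_le_sum_of_subset_of_nonpos'
    (f := fun j => p (e j) * r (e j)) (fun j hj => ?_) ?_) _
  · simp only [Finset.mem_filter, Finset.mem_univ, true_and] at hj ⊢
    omega
  · exact fun j _ _ => mul_nonpos_of_nonneg_of_nonpos (hp _) (hneg j).le

lemma Lfun_eq_dotProduct (he_inj : Function.Injective e)
    (he_range : ∀ ω, r ω < 0 ↔ ω ∈ Set.range e) (p : Ω → ℝ) : Lfun r e K p = p ⬝ᵥ r := by
  classical
  have him : Finset.univ.image e = Finset.univ.filter (fun ω => ¬ 0 ≤ r ω) := by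
    ext ω
    simp [he_range]
  have hall : Finset.univ.filter (fun j : Fin K => (j : ℕ) + 1 ≤ K) = Finset.univ :=
    Finset.filter_true_of_mem fun j _ => j.isLt
  rw [Lfun, hall, ← Finset.sum_image (f := fun ω => p ω * r ω) fun _ _ _ _ h => he_inj h, him,
    Finset.sum_filter_add_sum_filter_not, dotProduct]

lemma mem_Obar_succ_iff {n : ℕ} {p : Ω → ℝ} :
    p ∈ Obar r e (n + 1) ↔ p ∈ stdSimplex ℝ Ω ∧ 0 ≤ Lfun r e n p ∧ Lfun r e (n + 1) p ≤ 0 := by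
  unfold Obar
  rw [Nat.add_sub_cancel]
  rfl

lemma convex_Obar (k : ℕ) : Convex ℝ (Obar r e k) := by
  rintro x ⟨hx, hx1, hx2⟩ y ⟨hy, hy1, hy2⟩ a b ha hb hab
  refine ⟨convex_stdSimplex ℝ Ω hx hy ha hb hab, ?_, ?_⟩ <;>
    simp only [Lfun_add, Lfun_smul] <;> nlinarith [mul_nonneg ha hx1, mul_nonneg hb hy1,
      mul_nonneg ha (neg_nonneg.2 hx2), mul_nonneg hb (neg_nonneg.2 hy2)]

end Lfun

structure IsNegEnumeration (r : Ω → ℝ) {K : ℕ} (e : Fin K → Ω) : Prop where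
  injective : Function.Injective e
  neg_iff_mem_range : ∀ ω, r ω < 0 ↔ ω ∈ Set.range e
  antitone : Antitone fun j => r (e j)

lemma IsNegEnumeration.neg {r : Ω → ℝ} {K : ℕ} {e : Fin K → Ω} (he : IsNegEnumeration r e)
    (j : Fin K) : r (e j) < 0 :=
  (he.neg_iff_mem_range (e j)).2 ⟨j, rfl⟩

section piStar

variable [Fintype Ω] [DecidableEq Ω] {K : ℕ} {r : Ω → ℝ} {e : Fin K → Ω}

lemma piStar_apply_of_nonneg (hneg : ∀ j, r (e j) < 0) (p : Ω → ℝ) {ω : Ω} (hω : 0 ≤ r ω) :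
    piStar r e p ω = p ω := by
  have hne : ∀ j, ω ≠ e j := fun j h => (hneg j).not_ge (h ▸ hω)
  simp only [piStar, Pi.add_apply, Finset.sum_apply, Pi.smul_apply, Pi.single_apply, smul_eq_mul]
  simp [hω, hne]

lemma piStar_apply_enum (he_inj : Function.Injective e) (hneg : ∀ j, r (e j) < 0)
    (p : Ω → ℝ) (j : Fin K) :
    piStar r e p (e j) =
      if (j : ℕ) + 1 < kstar r e p then p (e j)
      else if (j : ℕ) + 1 = kstar r e p then -Lfun r e (kstar r e p - 1) p / r (e j)
      else 0 := by
  simp only [piStar, Pi.add_apply, Finset.sum_apply, Pi.smul_apply, Pi.single_apply, smul_eq_mul]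
  simp [(hneg j).not_ge, he_inj.eq_iff]

/-- On `Ō(i+1)` the greedy solution `π*` can be computed with the threshold `ω_{i+1}` itself,
even when `k*(p) ≤ i`: then `L` vanishes between `k*(p)` and `i`, which kills the extra terms. -/
lemma piStar_apply_enum_of_mem_Obar (he_inj : Function.Injective e) (hneg : ∀ j, r (e j) < 0)
    {i : Fin K} {p : Ω → ℝ} (hp : p ∈ Obar r e (i + 1)) (j : Fin K) :
    piStar r e p (e j) =
      if j < i then p (e j) else if j = i then -Lfun r e i p / r (e i) else 0 := by
  obtain ⟨hpΔ, hLi, hLi1⟩ := (mem_Obar_succ_iff r e).1 hp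
  have hmem : (i : ℕ) + 1 ∈ {n : ℕ | 1 ≤ n ∧ Lfun r e n p ≤ 0} := ⟨by omega, hLi1⟩
  obtain ⟨hs1, hLs⟩ : 1 ≤ kstar r e p ∧ Lfun r e (kstar r e p) p ≤ 0 := Nat.sInf_mem ⟨_, hmem⟩
  have hsi : kstar r e p ≤ i + 1 := Nat.sInf_le hmem
  have hzero : ∀ n, kstar r e p ≤ n → n ≤ i → Lfun r e n p = 0 := fun n h1 h2 =>
    le_antisymm ((Lfun_antitone r e hneg hpΔ.1 h1).trans hLs)
      (hLi.trans (Lfun_antitone r e hneg hpΔ.1 h2))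
  have hsucc : ∀ j' : Fin K, Lfun r e (j' + 1) p = 0 → p (e j') = -Lfun r e j' p / r (e j') := by
    intro j' h
    rw [Lfun_succ] at h
    field_simp [(hneg j').ne]
    linarith
  rw [piStar_apply_enum he_inj hneg]
  rcases lt_trichotomy j i with hji | rfl | hji
  · have hji' : (j : ℕ) < i := hji
    simp only [hji, if_true]
    split_ifs with h1 h2
    · rfl
    · rw [hsucc j (by rw [h2]; exact hzero _ le_rfl (by omega)), show kstar r e p - 1 = j by omega]
    · rw [hsucc j (hzero _ (by omega) (by omega)), hzero j (by omega) hji'.le, neg_zero, zero_div]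
  · simp only [lt_irrefl, if_false, if_true]
    split_ifs with h1 h2
    · omega
    · rw [show kstar r e p - 1 = j by omega]
    · rw [hzero j (by omega) le_rfl, neg_zero, zero_div]
  · have hji' : (i : ℕ) < j := hji
    simp only [hji.not_gt, hji.ne', if_false]
    split_ifs <;> first | rfl | omega

end piStar

section majorant

variable {r : Ω → ℝ} {ρ : ℝ}

/-- For `ρ = r(ω_k)`, `q ↦ q ⬝ᵥ majorantWeight r ρ` is the linear majorant `ℓ` of `r̂`. -/
def majorantWeight (r : Ω → ℝ) (ρ : ℝ) (ω : Ω) : ℝ := max 0 (1 - r ω / ρ)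

lemma majorantWeight_nonneg : 0 ≤ majorantWeight r ρ := fun _ => le_max_left _ _

lemma majorantWeight_of_le (hρ : ρ < 0) {ω : Ω} (h : ρ ≤ r ω) :
    majorantWeight r ρ ω = 1 - r ω / ρ := by
  rw [majorantWeight, max_eq_right]
  rwa [sub_nonneg, div_le_one_of_neg hρ]

lemma majorantWeight_of_ge (hρ : ρ < 0) {ω : Ω} (h : r ω ≤ ρ) : majorantWeight r ρ ω = 0 := by
  rw [majorantWeight, max_eq_left]
  rwa [sub_nonpos, one_le_div_of_neg hρ]

lemma dotProduct_majorantWeight_eq_sum [Fintype Ω] (hρ : ρ < 0) {q : Ω → ℝ}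
    (hqr : q ⬝ᵥ r = 0) (hq : ∀ ω, q ω ≠ 0 → ρ ≤ r ω) :
    q ⬝ᵥ majorantWeight r ρ = ∑ ω, q ω := by
  have hterm : ∀ ω, q ω * majorantWeight r ρ ω = q ω - q ω * r ω / ρ := fun ω => by
    by_cases h : q ω = 0
    · simp [h]
    · rw [majorantWeight_of_le hρ (hq ω h)]
      ring
  rw [dotProduct, Finset.sum_congr rfl fun ω _ => hterm ω, Finset.sum_sub_distrib,
    ← Finset.sum_div, ← dotProduct, hqr, zero_div, sub_zero]

lemma one_le_dotProduct_majorantWeight [Fintype Ω] (hρ : ρ < 0) {q : Ω → ℝ}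
    (hq : q ∈ invest r) : 1 ≤ q ⬝ᵥ majorantWeight r ρ := by
  obtain ⟨⟨hq0, hq1⟩, hqr⟩ := hq
  calc (1 : ℝ) ≤ ∑ ω, q ω - (∑ ω, q ω * r ω) / ρ := by
        rw [hq1, le_sub_self_iff]
        exact div_nonpos_of_nonneg_of_nonpos hqr hρ.le
    _ = ∑ ω, q ω * (1 - r ω / ρ) := by
        rw [Finset.sum_div, ← Finset.sum_sub_distrib]
        exact Finset.sum_congr rfl fun ω _ => by ring
    _ ≤ q ⬝ᵥ majorantWeight r ρ :=
        Finset.sum_le_sum fun ω _ => mul_le_mul_of_nonneg_left (le_max_right _ _) (hq0 ω)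

lemma indicator_invest_le [Fintype Ω] (hρ : ρ < 0) {q : Ω → ℝ} (hq : q ∈ stdSimplex ℝ Ω) :
    (invest r).indicator 1 q ≤ q ⬝ᵥ majorantWeight r ρ := by
  by_cases hI : q ∈ invest r
  · simpa [hI] using one_le_dotProduct_majorantWeight hρ hI
  · simpa [hI] using dotProduct_nonneg_of_nonneg hq.1 majorantWeight_nonneg

end majorant

section normalize

variable [Fintype Ω] {v : Ω → ℝ}

lemma sum_smul_inv_sum_smul (hv : 0 ≤ v) : (∑ ω, v ω) • (∑ ω, v ω)⁻¹ • v = v := by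
  by_cases h : ∑ ω, v ω = 0
  · rw [(Fintype.sum_eq_zero_iff_of_nonneg hv).1 h, smul_zero, smul_zero]
  · exact smul_inv_smul₀ h v

lemma inv_sum_smul_mem_stdSimplex (hv : 0 ≤ v) (h : ∑ ω, v ω ≠ 0) :
    (∑ ω, v ω)⁻¹ • v ∈ stdSimplex ℝ Ω :=
  ⟨fun ω => mul_nonneg (inv_nonneg.2 (Finset.sum_nonneg fun ω _ => hv ω)) (hv ω), by
    simp only [Pi.smul_apply, smul_eq_mul, ← Finset.mul_sum, inv_mul_cancel₀ h]⟩

lemma inv_sum_smul_mem_Obar {r : Ω → ℝ} {K : ℕ} {e : Fin K → Ω} {n : ℕ} (hv : 0 ≤ v)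
    (h : ∑ ω, v ω ≠ 0) (hL : 0 ≤ Lfun r e n v) (hL' : Lfun r e (n + 1) v ≤ 0) :
    (∑ ω, v ω)⁻¹ • v ∈ Obar r e (n + 1) := by
  have hc : 0 ≤ (∑ ω, v ω)⁻¹ := inv_nonneg.2 (Finset.sum_nonneg fun ω _ => hv ω)
  refine (mem_Obar_succ_iff r e).2 ⟨inv_sum_smul_mem_stdSimplex hv h, ?_, ?_⟩
  · rw [Lfun_smul]
    exact mul_nonneg hc hL
  · rw [Lfun_smul]
    exact mul_nonpos_of_nonneg_of_nonpos hc hL'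

end normalize

lemma one_sub_aI [Fintype Ω] [DecidableEq Ω] (r : Ω → ℝ) {K : ℕ} (e : Fin K → Ω) {p : Ω → ℝ}
    (hp : p ∈ stdSimplex ℝ Ω) : 1 - aI r e p = ∑ ω, (p - piStar r e p) ω := by
  simp only [Pi.sub_apply, Finset.sum_sub_distrib, hp.2, aI]

section greedy

variable [Fintype Ω] [DecidableEq Ω] {K : ℕ} {r : Ω → ℝ} {e : Fin K → Ω}
  (he : IsNegEnumeration r e) {i : Fin K} {p : Ω → ℝ}
include he

lemma piStar_mem_Icc (hp : p ∈ Obar r e (i + 1)) (ω : Ω) : piStar r e p ω ∈ Icc 0 (p ω) := by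
  obtain ⟨hpΔ, hLi, hLi1⟩ := (mem_Obar_succ_iff r e).1 hp
  by_cases hω : 0 ≤ r ω
  · rw [piStar_apply_of_nonneg he.neg p hω]
    exact ⟨hpΔ.1 ω, le_rfl⟩
  obtain ⟨j, rfl⟩ := (he.neg_iff_mem_range ω).1 (not_le.1 hω)
  rw [piStar_apply_enum_of_mem_Obar he.injective he.neg hp]
  split_ifs with hji hji'
  · exact ⟨hpΔ.1 _, le_rfl⟩
  · subst hji'
    rw [Lfun_succ] at hLi1
    refine ⟨div_nonneg_of_nonpos (neg_nonpos.2 hLi) (he.neg j).le, ?_⟩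
    rw [div_le_iff_of_neg (he.neg j)]
    linarith
  · exact ⟨le_rfl, hpΔ.1 _⟩

lemma piStar_nonneg (hp : p ∈ Obar r e (i + 1)) : 0 ≤ piStar r e p :=
  fun ω => (piStar_mem_Icc he hp ω).1

lemma piStar_le (hp : p ∈ Obar r e (i + 1)) : piStar r e p ≤ p :=
  fun ω => (piStar_mem_Icc he hp ω).2

lemma Lfun_piStar (hp : p ∈ Obar r e (i + 1)) : Lfun r e i (piStar r e p) = Lfun r e i p :=
  Lfun_congr r e (fun _ hω => piStar_apply_of_nonneg he.neg p hω) fun j hj => by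
    rw [piStar_apply_enum_of_mem_Obar he.injective he.neg hp, if_pos (show j < i by omega)]

lemma Lfun_succ_piStar (hp : p ∈ Obar r e (i + 1)) : Lfun r e (i + 1) (piStar r e p) = 0 := by
  rw [Lfun_succ, Lfun_piStar he hp, piStar_apply_enum_of_mem_Obar he.injective he.neg hp,
    if_neg (lt_irrefl i), if_pos rfl, div_mul_cancel₀ _ (he.neg i).ne, add_neg_cancel]

lemma piStar_dotProduct (hp : p ∈ Obar r e (i + 1)) : piStar r e p ⬝ᵥ r = 0 := by
  rw [← Lfun_eq_dotProduct r e he.injective he.neg_iff_mem_range, ← Lfun_succ_piStar he hp]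
  refine Lfun_eq_of_le r e (Nat.succ_le_of_lt i.isLt) fun j hj _ => ?_
  rw [piStar_apply_enum_of_mem_Obar he.injective he.neg hp,
    if_neg (show ¬ j < i by omega), if_neg (show j ≠ i by omega)]

lemma le_of_piStar_ne_zero (hp : p ∈ Obar r e (i + 1)) {ω : Ω} (hω : piStar r e p ω ≠ 0) :
    r (e i) ≤ r ω := by
  by_cases hr : 0 ≤ r ω
  · exact (he.neg i).le.trans hr
  obtain ⟨j, rfl⟩ := (he.neg_iff_mem_range ω).1 (not_le.1 hr)
  rw [piStar_apply_enum_of_mem_Obar he.injective he.neg hp] at hω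
  refine he.antitone (not_lt.1 fun hij => hω ?_)
  rw [if_neg (not_lt.2 hij.le), if_neg hij.ne']

lemma le_of_sub_piStar_ne_zero (hp : p ∈ Obar r e (i + 1)) {ω : Ω}
    (hω : p ω - piStar r e p ω ≠ 0) : r ω ≤ r (e i) := by
  by_cases hr : 0 ≤ r ω
  · rw [piStar_apply_of_nonneg he.neg p hr, sub_self] at hω
    exact absurd rfl hω
  obtain ⟨j, rfl⟩ := (he.neg_iff_mem_range ω).1 (not_le.1 hr)
  rw [piStar_apply_enum_of_mem_Obar he.injective he.neg hp] at hω
  refine he.antitone (not_lt.1 fun hji => hω ?_)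
  rw [if_pos hji, sub_self]

lemma piStar_dotProduct_majorantWeight (hp : p ∈ Obar r e (i + 1)) :
    piStar r e p ⬝ᵥ majorantWeight r (r (e i)) = aI r e p :=
  dotProduct_majorantWeight_eq_sum (he.neg i) (piStar_dotProduct he hp)
    fun _ => le_of_piStar_ne_zero he hp

lemma sub_piStar_dotProduct_majorantWeight (hp : p ∈ Obar r e (i + 1)) :
    (p - piStar r e p) ⬝ᵥ majorantWeight r (r (e i)) = 0 :=
  Finset.sum_eq_zero fun ω _ => by
    by_cases hω : p ω - piStar r e p ω = 0
    · simp [hω]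
    · rw [majorantWeight_of_ge (he.neg i) (le_of_sub_piStar_ne_zero he hp hω), mul_zero]

lemma dotProduct_majorantWeight_of_mem_Obar (hp : p ∈ Obar r e (i + 1)) :
    p ⬝ᵥ majorantWeight r (r (e i)) = aI r e p := by
  rw [← piStar_dotProduct_majorantWeight he hp, ← add_zero (piStar r e p ⬝ᵥ _),
    ← sub_piStar_dotProduct_majorantWeight he hp, ← add_dotProduct, add_sub_cancel]

lemma aI_mem_Icc (hp : p ∈ Obar r e (i + 1)) : aI r e p ∈ Icc 0 1 := by
  have h := one_sub_aI r e hp.1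
  have : 0 ≤ ∑ ω, (p - piStar r e p) ω :=
    Finset.sum_nonneg fun ω _ => sub_nonneg.2 (piStar_le he hp ω)
  exact ⟨Finset.sum_nonneg fun ω _ => piStar_nonneg he hp ω, by linarith⟩

lemma aI_smul_qI_add (hp : p ∈ Obar r e (i + 1)) :
    aI r e p • qI r e p + (1 - aI r e p) • qJ r e p = p := by
  rw [qI, qJ, one_sub_aI r e hp.1, aI, sum_smul_inv_sum_smul (piStar_nonneg he hp),
    sum_smul_inv_sum_smul (sub_nonneg.2 (piStar_le he hp)), add_sub_cancel]

lemma qI_mem_Obar (hp : p ∈ Obar r e (i + 1)) (ha : aI r e p ≠ 0) :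
    qI r e p ∈ Obar r e (i + 1) :=
  inv_sum_smul_mem_Obar (piStar_nonneg he hp) ha
    ((Lfun_piStar he hp).symm ▸ ((mem_Obar_succ_iff r e).1 hp).2.1) (Lfun_succ_piStar he hp).le

lemma qI_mem_invest (hp : p ∈ Obar r e (i + 1)) (ha : aI r e p ≠ 0) : qI r e p ∈ invest r := by
  refine ⟨(qI_mem_Obar he hp ha).1, ?_⟩
  rw [qI, ← dotProduct, smul_dotProduct, piStar_dotProduct he hp, smul_zero]

lemma qJ_mem_Obar (hp : p ∈ Obar r e (i + 1)) (ha : aI r e p ≠ 1) :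
    qJ r e p ∈ Obar r e (i + 1) := by
  obtain ⟨-, -, hLi1⟩ := (mem_Obar_succ_iff r e).1 hp
  rw [qJ, one_sub_aI r e hp.1]
  refine inv_sum_smul_mem_Obar (sub_nonneg.2 (piStar_le he hp))
    (by rw [← one_sub_aI r e hp.1]; exact sub_ne_zero.2 ha.symm) ?_ ?_
  · rw [Lfun_sub, Lfun_piStar he hp, sub_self]
  · rwa [Lfun_sub, Lfun_succ_piStar he hp, sub_zero]

lemma aI_eq_one_and_qI_eq_of_mem_invest (hp : p ∈ Obar r e (i + 1)) (hpI : p ∈ invest r) :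
    aI r e p = 1 ∧ qI r e p = p := by
  have ha : aI r e p = 1 := le_antisymm (aI_mem_Icc he hp).2 <| by
    rw [← dotProduct_majorantWeight_of_mem_Obar he hp]
    exact one_le_dotProduct_majorantWeight (he.neg i) hpI
  have hsub : p - piStar r e p = 0 := by
    rw [← Fintype.sum_eq_zero_iff_of_nonneg (sub_nonneg.2 (piStar_le he hp)),
      ← one_sub_aI r e hp.1, ha, sub_self]
  rw [qI, ha, inv_one, one_smul, ← sub_eq_zero.1 hsub]
  exact ⟨rfl, rfl⟩

end greedy

lemma mapsTo_homothety {E : Type*} [AddCommGroup E] [Module ℝ E] {s : Set E} {m : E} {lam : ℝ}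
    {φ : E → E} (hφ : ∀ p, φ p = m + lam • (p - m)) (hs : Convex ℝ s) (hm : m ∈ s)
    (hlam : lam ∈ Icc 0 1) : MapsTo φ s s :=
  fun q hq => hφ q ▸ hs.add_smul_sub_mem hm hq hlam

section discountedValue

variable [Fintype Ω] {m : Ω → ℝ} {lam δ : ℝ} {φ : (Ω → ℝ) → Ω → ℝ}

lemma homothety_dotProduct (hφ : ∀ p, φ p = m + lam • (p - m)) (q w : Ω → ℝ) :
    φ q ⬝ᵥ w = m ⬝ᵥ w + lam * (q ⬝ᵥ w - m ⬝ᵥ w) := by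
  rw [hφ, add_dotProduct, smul_dotProduct, sub_dotProduct, smul_eq_mul]

lemma iterate_homothety_dotProduct (hφ : ∀ p, φ p = m + lam • (p - m)) (q w : Ω → ℝ) (n : ℕ) :
    φ^[n] q ⬝ᵥ w = m ⬝ᵥ w + lam ^ n * (q ⬝ᵥ w - m ⬝ᵥ w) := by
  induction n with
  | zero => simp
  | succ n ih =>
    rw [Function.iterate_succ_apply', homothety_dotProduct hφ, ih]
    ring

/-- The closed form of `(1 - δ) * ∑' n, δ ^ n * (φ^[n] q ⬝ᵥ w)` for the homothety `φ` with
center `m` and ratio `lam`. -/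
def discountedValue (w : Ω → ℝ) (δ lam : ℝ) (m q : Ω → ℝ) : ℝ :=
  m ⬝ᵥ w + (1 - δ) / (1 - δ * lam) * (q ⬝ᵥ w - m ⬝ᵥ w)

lemma discountedValue_eq_tsum (hδ : δ ∈ Ico 0 1) (hlam : lam ∈ Icc 0 1)
    (hφ : ∀ p, φ p = m + lam • (p - m)) (w q : Ω → ℝ) :
    discountedValue w δ lam m q = (1 - δ) * ∑' n : ℕ, δ ^ n * (φ^[n] q ⬝ᵥ w) := by
  obtain ⟨hδ0, hδ1⟩ := hδ
  have hδlam0 : 0 ≤ δ * lam := mul_nonneg hδ0 hlam.1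
  have hδlam1 : δ * lam < 1 := by nlinarith [hlam.2]
  have hsum := ((hasSum_geometric_of_lt_one hδ0 hδ1).mul_left (m ⬝ᵥ w)).add
    ((hasSum_geometric_of_lt_one hδlam0 hδlam1).mul_left (q ⬝ᵥ w - m ⬝ᵥ w))
  have hterm : ∀ n : ℕ, δ ^ n * (φ^[n] q ⬝ᵥ w)
      = m ⬝ᵥ w * δ ^ n + (q ⬝ᵥ w - m ⬝ᵥ w) * (δ * lam) ^ n := fun n => by
    rw [iterate_homothety_dotProduct hφ, mul_pow]
    ring
  rw [tsum_congr hterm, hsum.tsum_eq, discountedValue]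
  field_simp [(sub_pos.2 hδ1).ne', (sub_pos.2 hδlam1).ne']

lemma discountedValue_eq_add (hδlam : δ * lam ≠ 1) (hφ : ∀ p, φ p = m + lam • (p - m))
    (w q : Ω → ℝ) :
    discountedValue w δ lam m q = (1 - δ) * (q ⬝ᵥ w) + δ * discountedValue w δ lam m (φ q) := by
  rw [discountedValue, discountedValue, homothety_dotProduct hφ]
  field_simp [sub_ne_zero.2 hδlam.symm]
  ring

lemma discountedValue_homothety (hφ : ∀ p, φ p = m + lam • (p - m)) (w q : Ω → ℝ) :
    discountedValue w δ lam m (φ q)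
      = m ⬝ᵥ w + (1 - δ) / (1 - δ * lam) * lam * (q ⬝ᵥ w - m ⬝ᵥ w) := by
  rw [discountedValue, homothety_dotProduct hφ]
  ring

lemma dotProduct_mem_Icc {w q : Ω → ℝ} (hw : 0 ≤ w) (hq : q ∈ stdSimplex ℝ Ω) :
    q ⬝ᵥ w ∈ Icc 0 (∑ ω, w ω) :=
  ⟨dotProduct_nonneg_of_nonneg hq.1 hw, Finset.sum_le_sum fun ω _ =>
    mul_le_of_le_one_left (hw ω) (mem_Icc_of_mem_stdSimplex hq ω).2⟩

lemma discountedValue_mem_Icc (hδ : δ ∈ Ico 0 1) (hlam : lam ∈ Icc 0 1) {w q : Ω → ℝ}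
    (hw : 0 ≤ w) (hm : m ∈ stdSimplex ℝ Ω) (hq : q ∈ stdSimplex ℝ Ω) :
    discountedValue w δ lam m q ∈ Icc 0 (∑ ω, w ω) := by
  obtain ⟨hδ0, hδ1⟩ := hδ
  have hden : 0 < 1 - δ * lam := by nlinarith [hlam.1, hlam.2]
  have hc0 : 0 ≤ (1 - δ) / (1 - δ * lam) := div_nonneg (by linarith) hden.le
  have hc1 : (1 - δ) / (1 - δ * lam) ≤ 1 := (div_le_one hden).2 (by nlinarith [hlam.2])
  obtain ⟨hm0, hm1⟩ := dotProduct_mem_Icc hw hm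
  obtain ⟨hq0, hq1⟩ := dotProduct_mem_Icc hw hq
  rw [discountedValue]
  constructor <;> nlinarith [mul_nonneg hc0 hq0, mul_nonneg (sub_nonneg.2 hc1) hm0,
    mul_le_mul_of_nonneg_left hq1 hc0, mul_le_mul_of_nonneg_left hm1 (sub_nonneg.2 hc1)]

lemma abs_discountedValue_le (hδ : δ ∈ Ico 0 1) (hlam : lam ∈ Icc 0 1) {w q : Ω → ℝ}
    (hw : 0 ≤ w) (hm : m ∈ stdSimplex ℝ Ω) (hq : q ∈ stdSimplex ℝ Ω) :
    |discountedValue w δ lam m q| ≤ ∑ ω, w ω :=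
  have h := discountedValue_mem_Icc hδ hlam hw hm hq
  (abs_of_nonneg h.1).trans_le h.2

end discountedValue

section twoPoint

variable {X : Type*} [MeasurableSpace X] {a : ℝ} {x y : X}

def twoPoint (a : ℝ) (x y : X) : Measure X :=
  ENNReal.ofReal a • Measure.dirac x + ENNReal.ofReal (1 - a) • Measure.dirac y

lemma isProbabilityMeasure_twoPoint (ha : a ∈ Icc 0 1) : IsProbabilityMeasure (twoPoint a x y) := by
  constructor
  rw [twoPoint, Measure.add_apply, Measure.smul_apply, Measure.smul_apply, measure_univ,
    measure_univ, smul_eq_mul, smul_eq_mul, mul_one, mul_one,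
    ← ENNReal.ofReal_add ha.1 (sub_nonneg.2 ha.2), add_sub_cancel, ENNReal.ofReal_one]

lemma integral_twoPoint [MeasurableSingletonClass X] {E : Type*} [NormedAddCommGroup E]
    [NormedSpace ℝ E] [CompleteSpace E] (ha : a ∈ Icc 0 1) (f : X → E) :
    ∫ z, f z ∂twoPoint a x y = a • f x + (1 - a) • f y := by
  rw [twoPoint, integral_add_measure
    ((integrable_dirac enorm_lt_top).smul_measure ENNReal.ofReal_ne_top)
    ((integrable_dirac enorm_lt_top).smul_measure ENNReal.ofReal_ne_top),
    integral_smul_measure, integral_smul_measure, integral_dirac, integral_dirac,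
    ENNReal.toReal_ofReal ha.1, ENNReal.toReal_ofReal (sub_nonneg.2 ha.2)]

lemma measureReal_twoPoint [MeasurableSingletonClass X] (ha : a ∈ Icc 0 1) {s : Set X}
    (hs : MeasurableSet s) :
    (twoPoint a x y).real s = a * s.indicator 1 x + (1 - a) * s.indicator 1 y := by
  rw [← integral_indicator_one hs, integral_twoPoint ha, smul_eq_mul, smul_eq_mul]

end twoPoint

lemma mul_indicator_one_eq_self {X : Type*} {s : Set X} {z : X} {c : ℝ} (h : c ≠ 0 → z ∈ s) :
    c * s.indicator 1 z = c := by
  by_cases hc : c = 0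
  · rw [hc, zero_mul]
  · rw [indicator_of_mem (h hc), Pi.one_apply, mul_one]

section splittings

variable [Fintype Ω] {p : Ω → ℝ} {μ : Measure (Ω → ℝ)}

lemma isClosed_invest (r : Ω → ℝ) : IsClosed (invest r) :=
  (isClosed_stdSimplex ℝ Ω).inter
    (isClosed_le continuous_const (continuous_id.dotProduct continuous_const))

lemma twoPoint_mem_Splittings {a : ℝ} (ha : a ∈ Icc 0 1) {x y : Ω → ℝ}
    (hx : a ≠ 0 → x ∈ stdSimplex ℝ Ω) (hy : a ≠ 1 → y ∈ stdSimplex ℝ Ω) :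
    twoPoint a x y ∈ Splittings (a • x + (1 - a) • y) := by
  have := isProbabilityMeasure_twoPoint (x := x) (y := y) ha
  refine ⟨this, ?_, integral_twoPoint ha id⟩
  rw [← ENNReal.toReal_eq_one_iff, ← measureReal_def,
    measureReal_twoPoint ha (isClosed_stdSimplex ℝ Ω).measurableSet, mul_indicator_one_eq_self hx,
    mul_indicator_one_eq_self fun h => hy (by contrapose! h; simp [h]), add_sub_cancel]

lemma ae_mem_stdSimplex_of_mem_Splittings (hμ : μ ∈ Splittings p) :
    ∀ᵐ q ∂μ, q ∈ stdSimplex ℝ Ω := by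
  have := hμ.1
  rw [ae_iff_measure_eq (p := (· ∈ stdSimplex ℝ Ω))
    (isClosed_stdSimplex ℝ Ω).measurableSet.nullMeasurableSet, measure_univ]
  exact hμ.2.1

lemma integrable_apply_of_mem_Splittings (hμ : μ ∈ Splittings p) (ω : Ω) :
    Integrable (fun q => q ω) μ := by
  have := hμ.1
  refine Integrable.of_bound (measurable_pi_apply ω).aestronglyMeasurable 1 ?_
  filter_upwards [ae_mem_stdSimplex_of_mem_Splittings hμ] with q hq
  obtain ⟨h0, h1⟩ := mem_Icc_of_mem_stdSimplex hq ω
  rwa [Real.norm_eq_abs, abs_of_nonneg h0]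

lemma integrable_dotProduct_of_mem_Splittings (hμ : μ ∈ Splittings p) (w : Ω → ℝ) :
    Integrable (fun q => q ⬝ᵥ w) μ :=
  integrable_finsetSum _ fun ω _ => (integrable_apply_of_mem_Splittings hμ ω).mul_const _

lemma integral_dotProduct_of_mem_Splittings (hμ : μ ∈ Splittings p) (w : Ω → ℝ) :
    ∫ q, q ⬝ᵥ w ∂μ = p ⬝ᵥ w := by
  rw [dotProduct, ← hμ.2.2]
  simp only [dotProduct, eval_integral (integrable_apply_of_mem_Splittings hμ)]
  rw [integral_finsetSum _ fun ω _ => (integrable_apply_of_mem_Splittings hμ ω).mul_const _]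
  simp only [integral_mul_const]

lemma integral_affine_of_mem_Splittings (hμ : μ ∈ Splittings p) (α β : ℝ) (w : Ω → ℝ) :
    ∫ q, α + β * (q ⬝ᵥ w) ∂μ = α + β * (p ⬝ᵥ w) := by
  have := hμ.1
  rw [integral_add (integrable_const α)
    ((integrable_dotProduct_of_mem_Splittings hμ w).const_mul β), integral_const,
    integral_const_mul, integral_dotProduct_of_mem_Splittings hμ, probReal_univ, one_smul]

lemma setIntegral_stdSimplex_of_mem_Splittings (hμ : μ ∈ Splittings p) (f : (Ω → ℝ) → ℝ) :
    ∫ q in stdSimplex ℝ Ω, f q ∂μ = ∫ q, f q ∂μ := by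
  rw [Measure.restrict_eq_self_of_ae_mem (ae_mem_stdSimplex_of_mem_Splittings hμ)]

lemma measureReal_invest_le {r : Ω → ℝ} {ρ : ℝ} (hρ : ρ < 0) (hμ : μ ∈ Splittings p) :
    μ.real (invest r) ≤ p ⬝ᵥ majorantWeight r ρ := by
  have := hμ.1
  rw [← integral_indicator_one (isClosed_invest r).measurableSet,
    ← integral_dotProduct_of_mem_Splittings hμ]
  refine integral_mono_ae ((integrable_const 1).indicator (isClosed_invest r).measurableSet)
    (integrable_dotProduct_of_mem_Splittings hμ _) ?_
  filter_upwards [ae_mem_stdSimplex_of_mem_Splittings hμ] with q hq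
  exact indicator_invest_le hρ hq

lemma rhat_le {r : Ω → ℝ} {ρ : ℝ} (hρ : ρ < 0) (hp : p ∈ stdSimplex ℝ Ω) :
    rhat r p ≤ p ⬝ᵥ majorantWeight r ρ :=
  Real.sSup_le (fun _ ⟨_, hμ, hval⟩ => hval ▸ measureReal_invest_le hρ hμ)
    (dotProduct_nonneg_of_nonneg hp.1 majorantWeight_nonneg)

end splittings

lemma le_zero_of_le_mul_of_bddAbove {X : Type*} {D : Set X} {u : X → ℝ} {δ : ℝ}
    (hδ : δ ∈ Ico 0 1) (hbdd : BddAbove (u '' D))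
    (h : ∀ M, 0 ≤ M → (∀ q ∈ D, u q ≤ M) → ∀ p ∈ D, u p ≤ δ * M) : ∀ p ∈ D, u p ≤ 0 := by
  set M := max (sSup (u '' D)) 0
  have hM : ∀ q ∈ D, u q ≤ M := fun q hq => (le_csSup hbdd ⟨q, hq, rfl⟩).trans (le_max_left _ _)
  have hMδ : M ≤ δ * M := max_le
    (Real.sSup_le (fun _ ⟨q, hq, hu⟩ => hu ▸ h M (le_max_right _ _) hM q hq)
      (mul_nonneg hδ.1 (le_max_right _ _))) (mul_nonneg hδ.1 (le_max_right _ _))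
  have hM0 : M ≤ 0 := by nlinarith [hδ.2]
  exact fun p hp => (hM p hp).trans hM0

lemma bddAbove_image_sub {X : Type*} {S : Set X} {f h : X → ℝ} {C C' : ℝ}
    (hf : ∀ p ∈ S, |f p| ≤ C) (hh : ∀ p ∈ S, |h p| ≤ C') :
    BddAbove ((fun p => f p - h p) '' S) :=
  ⟨C + C', fun _ ⟨p, hp, hval⟩ => hval ▸ by
    linarith [(abs_le.1 (hf p hp)).2, (abs_le.1 (hh p hp)).1]⟩

lemma mul_add_one_sub_mul_le {a x y M : ℝ} (ha : a ∈ Icc 0 1) (hx : a ≠ 0 → x ≤ M)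
    (hy : a ≠ 1 → y ≤ M) : a * x + (1 - a) * y ≤ M := by
  by_cases h0 : a = 0
  · subst h0
    linarith [hy zero_ne_one]
  by_cases h1 : a = 1
  · subst h1
    linarith [hx one_ne_zero]
  nlinarith [hx h0, hy h1, ha.1, ha.2]

section dpp

variable [Fintype Ω] {p : Ω → ℝ} {μ : Measure (Ω → ℝ)} {r : Ω → ℝ} {δ lam : ℝ} {m : Ω → ℝ}
  {φ : (Ω → ℝ) → Ω → ℝ} {V : (Ω → ℝ) → ℝ}

lemma bddAbove_dppPayoff (hδ : δ ∈ Icc 0 1)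
    (hφ : MapsTo φ (stdSimplex ℝ Ω) (stdSimplex ℝ Ω)) {C : ℝ}
    (hV : ∀ q ∈ stdSimplex ℝ Ω, |V q| ≤ C) : BddAbove (dppPayoff r δ φ V '' Splittings p) := by
  refine ⟨(1 - δ) + δ * C, ?_⟩
  rintro _ ⟨μ, hμ, rfl⟩
  have := hμ.1
  have hI : μ.real (invest r) ≤ 1 := measureReal_le_one
  have hint : ∫ q in stdSimplex ℝ Ω, V (φ q) ∂μ ≤ C := by
    rw [setIntegral_stdSimplex_of_mem_Splittings hμ]
    refine (le_abs_self _).trans ?_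
    have := norm_integral_le_of_norm_le_const (μ := μ) (C := C) (f := fun q => V (φ q)) <| by
      filter_upwards [ae_mem_stdSimplex_of_mem_Splittings hμ] with q hq
      exact hV _ (hφ hq)
    rwa [probReal_univ, mul_one] at this
  rw [dppPayoff, ← measureReal_def]
  nlinarith [hδ.1, hδ.2]

lemma dppPayoff_le_discountedValue (hδ : δ ∈ Ico 0 1) (hlam : lam ∈ Icc 0 1)
    (hφ : ∀ p, φ p = m + lam • (p - m)) (hm : m ∈ stdSimplex ℝ Ω) {ρ : ℝ} (hρ : ρ < 0)
    {M : ℝ} (hM : 0 ≤ M)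
    (hVM : ∀ q ∈ stdSimplex ℝ Ω, V q ≤ discountedValue (majorantWeight r ρ) δ lam m q + M)
    (hp : p ∈ stdSimplex ℝ Ω) (hμ : μ ∈ Splittings p) :
    dppPayoff r δ φ V μ ≤ discountedValue (majorantWeight r ρ) δ lam m p + δ * M := by
  set w := majorantWeight r ρ
  set g := discountedValue w δ lam m
  have := hμ.1
  have hφΔ := mapsTo_homothety hφ (convex_stdSimplex ℝ Ω) hm hlam
  have hδlam : δ * lam ≠ 1 := by nlinarith [hδ.1, hδ.2, hlam.1, hlam.2]
  have hgφ : ∀ q, g (φ q) = (m ⬝ᵥ w - (1 - δ) / (1 - δ * lam) * lam * m ⬝ᵥ w)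
      + (1 - δ) / (1 - δ * lam) * lam * (q ⬝ᵥ w) := fun q => by
    rw [show g (φ q) = _ from discountedValue_homothety hφ w q]
    ring
  have hgφ_int : Integrable (fun q => g (φ q)) μ := by
    simp_rw [hgφ]
    exact (integrable_const _).add ((integrable_dotProduct_of_mem_Splittings hμ w).const_mul _)
  have hgφ_eq : ∫ q, g (φ q) ∂μ = g (φ p) := by
    simp_rw [hgφ]
    exact integral_affine_of_mem_Splittings hμ _ _ w
  have hint : ∫ q in stdSimplex ℝ Ω, V (φ q) ∂μ ≤ g (φ p) + M := by
    rw [setIntegral_stdSimplex_of_mem_Splittings hμ]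
    by_cases hVi : Integrable (fun q => V (φ q)) μ
    · calc ∫ q, V (φ q) ∂μ ≤ ∫ q, g (φ q) + M ∂μ := integral_mono_ae hVi
            (hgφ_int.add (integrable_const M)) <| by
              filter_upwards [ae_mem_stdSimplex_of_mem_Splittings hμ] with q hq
              exact hVM _ (hφΔ hq)
        _ = g (φ p) + M := by
          rw [integral_add hgφ_int (integrable_const M), hgφ_eq, integral_const, probReal_univ,
            one_smul]
    -- `V ∘ φ` need not be integrable, and then its integral is `0`.
    · rw [integral_undef hVi]
      exact add_nonneg (discountedValue_mem_Icc hδ hlam majorantWeight_nonneg hm (hφΔ hp)).1 hM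
  rw [dppPayoff, ← measureReal_def, show g p = _ from discountedValue_eq_add hδlam hφ w p]
  nlinarith [mul_le_mul_of_nonneg_left (measureReal_invest_le (r := r) hρ hμ)
    (sub_nonneg.2 hδ.2.le), mul_le_mul_of_nonneg_left hint hδ.1]

lemma le_discountedValue_of_satisfiesDPP (hδ : δ ∈ Ico 0 1) (hlam : lam ∈ Icc 0 1)
    (hφ : ∀ p, φ p = m + lam • (p - m)) (hm : m ∈ stdSimplex ℝ Ω) {ρ : ℝ} (hρ : ρ < 0)
    {C : ℝ} (hVb : ∀ q ∈ stdSimplex ℝ Ω, |V q| ≤ C) (hV : SatisfiesDPP r δ φ V) :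
    ∀ q ∈ stdSimplex ℝ Ω, V q ≤ discountedValue (majorantWeight r ρ) δ lam m q := by
  have hg : ∀ q ∈ stdSimplex ℝ Ω, 0 ≤ discountedValue (majorantWeight r ρ) δ lam m q :=
    fun q hq => (discountedValue_mem_Icc hδ hlam majorantWeight_nonneg hm hq).1
  have hbdd : BddAbove ((fun q => V q - discountedValue (majorantWeight r ρ) δ lam m q) ''
      stdSimplex ℝ Ω) :=
    ⟨C, fun _ ⟨q, hq, hval⟩ => hval ▸ by linarith [hg q hq, (abs_le.1 (hVb q hq)).2]⟩
  refine fun q hq => sub_nonpos.1 (le_zero_of_le_mul_of_bddAbove hδ hbdd ?_ q hq)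
  intro M hM hVM p hp
  rw [hV p hp, sub_le_iff_le_add']
  exact Real.sSup_le (fun _ ⟨μ, hμ, hval⟩ => hval ▸ dppPayoff_le_discountedValue hδ hlam hφ hm
      hρ hM (fun q hq => by linarith [hVM q hq]) hp hμ)
    (add_nonneg (hg p hp) (mul_nonneg hδ.1 hM))

end dpp

/-- The right-hand side of the greedy recursion for `γ` on `J`. On `Ō(k)` it also gives the
recursion on `I` (`greedyBellman_of_mem_invest`), so it serves as the greedy operator there. -/
def greedyBellman [Fintype Ω] [DecidableEq Ω] (r : Ω → ℝ) {K : ℕ} (e : Fin K → Ω) (δ : ℝ)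
    (φ : (Ω → ℝ) → Ω → ℝ) (f : (Ω → ℝ) → ℝ) (p : Ω → ℝ) : ℝ :=
  aI r e p * ((1 - δ) + δ * f (φ (qI r e p))) + (1 - aI r e p) * (δ * f (φ (qJ r e p)))

section greedyBellman

variable [Fintype Ω] [DecidableEq Ω] {K : ℕ} {r : Ω → ℝ} {e : Fin K → Ω}
  (he : IsNegEnumeration r e) {i : Fin K} {p : Ω → ℝ} {δ lam : ℝ} {m : Ω → ℝ}
  {φ : (Ω → ℝ) → Ω → ℝ} {V : (Ω → ℝ) → ℝ}
include he

lemma greedyBellman_of_mem_invest (hp : p ∈ Obar r e (i + 1)) (hpI : p ∈ invest r)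
    (f : (Ω → ℝ) → ℝ) : greedyBellman r e δ φ f p = (1 - δ) + δ * f (φ p) := by
  obtain ⟨ha, hq⟩ := aI_eq_one_and_qI_eq_of_mem_invest he hp hpI
  rw [greedyBellman, ha, hq, one_mul, sub_self, zero_mul, add_zero]

lemma greedyBellman_sub_le (hδ : 0 ≤ δ) (hφ : MapsTo φ (Obar r e (i + 1)) (Obar r e (i + 1)))
    (hp : p ∈ Obar r e (i + 1)) {f h : (Ω → ℝ) → ℝ} {M : ℝ}
    (hM : ∀ q ∈ Obar r e (i + 1), f q - h q ≤ M) :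
    greedyBellman r e δ φ f p - greedyBellman r e δ φ h p ≤ δ * M := by
  have key : greedyBellman r e δ φ f p - greedyBellman r e δ φ h p
      = δ * (aI r e p * (f (φ (qI r e p)) - h (φ (qI r e p)))
        + (1 - aI r e p) * (f (φ (qJ r e p)) - h (φ (qJ r e p)))) := by
    rw [greedyBellman, greedyBellman]
    ring
  rw [key]
  exact mul_le_mul_of_nonneg_left (mul_add_one_sub_mul_le (aI_mem_Icc he hp)
    (fun ha => hM _ (hφ (qI_mem_Obar he hp ha))) fun ha => hM _ (hφ (qJ_mem_Obar he hp ha))) hδ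

lemma le_of_le_greedyBellman (hδ : δ ∈ Ico 0 1)
    (hφ : MapsTo φ (Obar r e (i + 1)) (Obar r e (i + 1))) {f h : (Ω → ℝ) → ℝ}
    (hf : ∀ p ∈ Obar r e (i + 1), f p ≤ greedyBellman r e δ φ f p)
    (hh : ∀ p ∈ Obar r e (i + 1), greedyBellman r e δ φ h p ≤ h p)
    (hbdd : BddAbove ((fun p => f p - h p) '' Obar r e (i + 1))) :
    ∀ p ∈ Obar r e (i + 1), f p ≤ h p := by
  refine fun p hp => sub_nonpos.1 (le_zero_of_le_mul_of_bddAbove hδ hbdd ?_ p hp)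
  intro M _ hM p hp
  linarith [hf p hp, hh p hp, greedyBellman_sub_le he hδ.1 hφ hp hM]

lemma greedyBellman_discountedValue (hδlam : δ * lam ≠ 1) (hφ : ∀ p, φ p = m + lam • (p - m))
    (hp : p ∈ Obar r e (i + 1)) :
    greedyBellman r e δ φ (discountedValue (majorantWeight r (r (e i))) δ lam m) p
      = discountedValue (majorantWeight r (r (e i))) δ lam m p := by
  set w := majorantWeight r (r (e i))
  have hdec := congrArg (· ⬝ᵥ w) (aI_smul_qI_add he hp)
  simp only [add_dotProduct, smul_dotProduct, smul_eq_mul] at hdec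
  have hpa : p ⬝ᵥ w = aI r e p := dotProduct_majorantWeight_of_mem_Obar he hp
  rw [greedyBellman, discountedValue_eq_add hδlam hφ w p, discountedValue_homothety hφ,
    discountedValue_homothety hφ, discountedValue_homothety hφ]
  linear_combination (δ * ((1 - δ) / (1 - δ * lam) * lam)) * hdec - (1 - δ) * hpa

lemma twoPoint_aI_mem_Splittings (hp : p ∈ Obar r e (i + 1)) :
    twoPoint (aI r e p) (qI r e p) (qJ r e p) ∈ Splittings p := by
  have h := twoPoint_mem_Splittings (aI_mem_Icc he hp) (fun ha => (qI_mem_Obar he hp ha).1)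
    fun ha => (qJ_mem_Obar he hp ha).1
  rwa [aI_smul_qI_add he hp] at h

lemma aI_le_measureReal_twoPoint_invest (hp : p ∈ Obar r e (i + 1)) :
    aI r e p ≤ (twoPoint (aI r e p) (qI r e p) (qJ r e p)).real (invest r) := by
  rw [measureReal_twoPoint (aI_mem_Icc he hp) (isClosed_invest r).measurableSet,
    mul_indicator_one_eq_self (qI_mem_invest he hp)]
  exact le_add_of_nonneg_right (mul_nonneg (sub_nonneg.2 (aI_mem_Icc he hp).2)
    (indicator_nonneg (fun _ _ => zero_le_one) _))

lemma rhat_eq_of_mem_Obar (hp : p ∈ Obar r e (i + 1)) :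
    rhat r p = p ⬝ᵥ majorantWeight r (r (e i)) := by
  refine le_antisymm (rhat_le (he.neg i) hp.1) ?_
  have hbdd : BddAbove ((fun μ : Measure (Ω → ℝ) => (μ (invest r)).toReal) '' Splittings p) :=
    ⟨1, fun _ ⟨μ, hμ, hval⟩ => hval ▸ (have := hμ.1; measureReal_le_one)⟩
  rw [dotProduct_majorantWeight_of_mem_Obar he hp]
  exact (aI_le_measureReal_twoPoint_invest he hp).trans
    (le_csSup hbdd ⟨_, twoPoint_aI_mem_Splittings he hp, rfl⟩)

lemma greedyBellman_le_of_satisfiesDPP (hδ : δ ∈ Icc 0 1)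
    (hφ : MapsTo φ (stdSimplex ℝ Ω) (stdSimplex ℝ Ω)) {C : ℝ}
    (hVb : ∀ q ∈ stdSimplex ℝ Ω, |V q| ≤ C) (hV : SatisfiesDPP r δ φ V)
    (hp : p ∈ Obar r e (i + 1)) : greedyBellman r e δ φ V p ≤ V p := by
  have hμ := twoPoint_aI_mem_Splittings he hp
  calc greedyBellman r e δ φ V p
      ≤ dppPayoff r δ φ V (twoPoint (aI r e p) (qI r e p) (qJ r e p)) := by
        rw [dppPayoff, ← measureReal_def, setIntegral_stdSimplex_of_mem_Splittings hμ,
          integral_twoPoint (aI_mem_Icc he hp), greedyBellman, smul_eq_mul, smul_eq_mul]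
        nlinarith [mul_le_mul_of_nonneg_left (aI_le_measureReal_twoPoint_invest he hp)
          (sub_nonneg.2 hδ.2)]
    _ ≤ V p := hV p hp.1 ▸ le_csSup (bddAbove_dppPayoff hδ hφ hVb) ⟨_, hμ, rfl⟩

lemma eqOn_discountedValue_of_greedyBellman_eq (hδ : δ ∈ Ico 0 1) (hlam : lam ∈ Icc 0 1)
    (hφ : ∀ p, φ p = m + lam • (p - m)) (hm : m ∈ Obar r e (i + 1)) {f : (Ω → ℝ) → ℝ}
    {C : ℝ} (hfb : ∀ q ∈ Obar r e (i + 1), |f q| ≤ C)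
    (hf : ∀ q ∈ Obar r e (i + 1), greedyBellman r e δ φ f q = f q) :
    ∀ q ∈ Obar r e (i + 1), f q = discountedValue (majorantWeight r (r (e i))) δ lam m q := by
  have hφO := mapsTo_homothety hφ (convex_Obar r e _) hm hlam
  have hδlam : δ * lam ≠ 1 := by nlinarith [hδ.1, hδ.2, hlam.1, hlam.2]
  have hg := fun q (hq : q ∈ Obar r e (i + 1)) =>
    abs_discountedValue_le hδ hlam (majorantWeight_nonneg (r := r) (ρ := r (e i))) hm.1 hq.1
  have hgT := fun q (hq : q ∈ Obar r e (i + 1)) => greedyBellman_discountedValue he hδlam hφ hq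
  exact fun q hq => le_antisymm
    (le_of_le_greedyBellman he hδ hφO (fun q hq => (hf q hq).ge) (fun q hq => (hgT q hq).le)
      (bddAbove_image_sub hfb hg) q hq)
    (le_of_le_greedyBellman he hδ hφO (fun q hq => (hgT q hq).ge) (fun q hq => (hf q hq).le)
      (bddAbove_image_sub hg hfb) q hq)

lemma discountedValue_le_of_satisfiesDPP (hδ : δ ∈ Ico 0 1) (hlam : lam ∈ Icc 0 1)
    (hφ : ∀ p, φ p = m + lam • (p - m)) (hm : m ∈ Obar r e (i + 1)) {C : ℝ}
    (hVb : ∀ q ∈ stdSimplex ℝ Ω, |V q| ≤ C) (hV : SatisfiesDPP r δ φ V) :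
    ∀ q ∈ Obar r e (i + 1), discountedValue (majorantWeight r (r (e i))) δ lam m q ≤ V q := by
  have hδlam : δ * lam ≠ 1 := by nlinarith [hδ.1, hδ.2, hlam.1, hlam.2]
  have hφΔ := mapsTo_homothety hφ (convex_stdSimplex ℝ Ω) hm.1 hlam
  exact le_of_le_greedyBellman he hδ (mapsTo_homothety hφ (convex_Obar r e _) hm hlam)
    (fun q hq => (greedyBellman_discountedValue he hδlam hφ hq).ge)
    (fun q hq => greedyBellman_le_of_satisfiesDPP he (Ico_subset_Icc_self hδ) hφΔ hVb hV hq)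
    (bddAbove_image_sub (fun q hq => abs_discountedValue_le hδ hlam majorantWeight_nonneg hm.1 hq.1)
      fun q hq => hVb q hq.1)

end greedyBellman

theorem greedy_optimal_on_Obar_general [Fintype Ω] [DecidableEq Ω] {K : ℕ}
    (r : Ω → ℝ) (e : Fin K → Ω)
    (he_inj : Function.Injective e)
    (he_range : ∀ ω, r ω < 0 ↔ ω ∈ Set.range e)
    (he_anti : Antitone fun i => r (e i))
    (δ : ℝ) (hδ : δ ∈ Ico (0 : ℝ) 1)
    (m : Ω → ℝ)
    (lam : ℝ) (hlam : lam ∈ Ico (0 : ℝ) 1)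
    (φ : (Ω → ℝ) → Ω → ℝ) (hφ : ∀ p, φ p = m + lam • (p - m))
    (k : ℕ) (hk1 : 1 ≤ k) (hkK : k ≤ K) (hmO : m ∈ Obar r e k)
    (γ : (Ω → ℝ) → ℝ)
    (hγb : ∃ C, ∀ p ∈ stdSimplex ℝ Ω, |γ p| ≤ C)
    (hγI : ∀ p ∈ invest r, γ p = (1 - δ) + δ * γ (φ p))
    (hγJ : ∀ p ∈ stdSimplex ℝ Ω, ∑ ω, p ω * r ω < 0 →
      γ p = aI r e p * ((1 - δ) + δ * γ (φ (qI r e p)))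
        + (1 - aI r e p) * (δ * γ (φ (qJ r e p)))) :
    (∀ p ∈ Obar r e k, γ p = (1 - δ) * ∑' n : ℕ, δ ^ n * rhat r (φ^[n] p)) ∧
    (∀ V : (Ω → ℝ) → ℝ, (∃ C, ∀ p ∈ stdSimplex ℝ Ω, |V p| ≤ C) →
      SatisfiesDPP r δ φ V → ∀ p ∈ Obar r e k, V p = γ p) := by
  -- `e` is indexed from `0`, so `ω_k = e i`.
  obtain ⟨i, rfl⟩ : ∃ i : Fin K, k = i + 1 := ⟨⟨k - 1, by omega⟩, by simp only; omega⟩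
  have he : IsNegEnumeration r e := ⟨he_inj, he_range, he_anti⟩
  have hlam' : lam ∈ Icc 0 1 := Ico_subset_Icc_self hlam
  have hγT : ∀ p ∈ Obar r e (i + 1), greedyBellman r e δ φ γ p = γ p := fun p hp => by
    by_cases hpI : p ∈ invest r
    · rw [greedyBellman_of_mem_invest he hp hpI, hγI p hpI]
    · exact (hγJ p hp.1 (not_le.1 fun h => hpI ⟨hp.1, h⟩)).symm
  obtain ⟨C, hC⟩ := hγb
  have hγg := eqOn_discountedValue_of_greedyBellman_eq he hδ hlam' hφ hmO
    (fun p hp => hC p hp.1) hγT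
  refine ⟨fun p hp => ?_, fun V ⟨CV, hCV⟩ hV p hp => ?_⟩
  · rw [hγg p hp, discountedValue_eq_tsum hδ hlam' hφ]
    refine congrArg _ (tsum_congr fun n => ?_)
    rw [rhat_eq_of_mem_Obar he
      ((mapsTo_homothety hφ (convex_Obar r e _) hmO hlam').iterate n hp)]
  · rw [hγg p hp]
    exact le_antisymm
      (le_discountedValue_of_satisfiesDPP hδ hlam' hφ hmO.1 (he.neg i) hCV hV p hp.1)
      (discountedValue_le_of_satisfiesDPP he hδ hlam' hφ hmO hCV hV p hp)

/-- let `φ` be the homothety with center `m` and ratio `λ ∈ [0,1)` and suppose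
`m ∈ Ō(k)`. Then on `Ō(k)` the greedy payoff achieves the first-best upper bound
`γ* = (1−δ)·Σ_n δ^n r̂(φ^{(n)}(·))`; consequently every bounded solution `V` of the dynamic
programming equation coincides with `γ` on `Ō(k)`: the greedy strategy is optimal there. -/
theorem greedy_optimal_on_Obar [Fintype Ω] [DecidableEq Ω] [Nonempty Ω] {K : ℕ}
    (r : Ω → ℝ) (e : Fin K → Ω)
    (hK : 0 < K) (hplus : ∃ ω, 0 ≤ r ω)
    (he_inj : Function.Injective e)
    (he_range : ∀ ω, r ω < 0 ↔ ω ∈ Set.range e)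
    (he_anti : Antitone fun i => r (e i))
    (δ : ℝ) (hδ : δ ∈ Ico (0 : ℝ) 1)
    (m : Ω → ℝ) (hm : m ∈ stdSimplex ℝ Ω)
    (lam : ℝ) (hlam : lam ∈ Ico (0 : ℝ) 1)
    (φ : (Ω → ℝ) → Ω → ℝ) (hφ : ∀ p, φ p = m + lam • (p - m))
    (k : ℕ) (hk1 : 1 ≤ k) (hkK : k ≤ K) (hmO : m ∈ Obar r e k)
    (γ : (Ω → ℝ) → ℝ)
    (hγb : ∃ C, ∀ p ∈ stdSimplex ℝ Ω, |γ p| ≤ C)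
    (hγI : ∀ p ∈ invest r, γ p = (1 - δ) + δ * γ (φ p))
    (hγJ : ∀ p ∈ stdSimplex ℝ Ω, ∑ ω, p ω * r ω < 0 →
      γ p = aI r e p * ((1 - δ) + δ * γ (φ (qI r e p)))
        + (1 - aI r e p) * (δ * γ (φ (qJ r e p)))) :
    (∀ p ∈ Obar r e k, γ p = (1 - δ) * ∑' n : ℕ, δ ^ n * rhat r (φ^[n] p)) ∧
    (∀ V : (Ω → ℝ) → ℝ, (∃ C, ∀ p ∈ stdSimplex ℝ Ω, |V p| ≤ C) →
      SatisfiesDPP r δ φ V → ∀ p ∈ Obar r e k, V p = γ p) :=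
  greedy_optimal_on_Obar_general r e he_inj he_range he_anti δ hδ m lam hlam φ hφ k hk1 hkK hmO γ
    hγb hγI hγJ

end
end
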